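/- arXiv:1803.00481 — 2 statements merged into one kernel-verified Lean document; each statement's English description precedes it below -/
import Mathlib

section
/- Under the standing assumptions, suppose W₁ is an initial walk from i to 1 on the trellis digraph 𝒯_{Γ(k)} of maximal weight, i.e. p_𝒯(W₁) = w_i*. Then its length satisfies l(W₁) ≤ (w_i* − α_i)/λ* + (n − 1). -/
/-
Common framework for "A bound for the rank-one transient of inhomogeneous matrix
products in special case" (Kennedy-Cochran-Patrick, Sergeev, Berežný).

We work over the max-plus semiring, modelled inside `EReal` (so `⊥ = -∞` is the
max-plus zero and ordinary addition is the max-plus multiplication).  Matrices are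
functions `Fin m → Fin m → EReal`.  The distinguished node "1" of the paper is the
node `0 : Fin (n+2)` (so that `n + 2 ≥ 2` plays the role of the paper's `n ≥ 2`).

A walk is a nonempty list of nodes.  Walks on the trellis digraph of the product
`A 1 ⊗ ⋯ ⊗ A k` additionally record the level at which they start: the arc from the
`(l-1)`-st to the `l`-th node of a walk starting at level `s` has weight given by the
matrix `A (s + l)`.
-/

open scoped Classical

noncomputable section

namespace MaxPlusTransient

variable {m : ℕ}

/-- Weight of a walk on the trellis digraph, starting at level `s`. -/
def tw (M : ℕ → Fin m → Fin m → EReal) : ℕ → List (Fin m) → EReal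
  | _, [] => 0
  | _, [_] => 0
  | s, a :: b :: t => M (s + 1) a b + tw M (s + 1) (b :: t)

/-- Being a walk on the trellis digraph, starting at level `s` (all traversed arcs exist,
i.e. have weight `≠ -∞`); a walk is a nonempty list of nodes. -/
def twalk (M : ℕ → Fin m → Fin m → EReal) : ℕ → List (Fin m) → Prop
  | _, [] => False
  | _, [_] => True
  | s, a :: b :: t => M (s + 1) a b ≠ ⊥ ∧ twalk M (s + 1) (b :: t)

/-- Weight of a walk on the digraph `D_A` of a single matrix `A`. -/
def wWeight (A : Fin m → Fin m → EReal) (W : List (Fin m)) : EReal :=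
  tw (fun _ => A) 0 W

/-- Being a walk on the digraph `D_A` of a matrix `A`. -/
def isWalk (A : Fin m → Fin m → EReal) (W : List (Fin m)) : Prop :=
  twalk (fun _ => A) 0 W

/-- A path is a walk with no repeated nodes. -/
def isPath (A : Fin m → Fin m → EReal) (W : List (Fin m)) : Prop :=
  isWalk A W ∧ W.Nodup

/-- A cycle is a walk of length (number of arcs) at least one whose first and last
nodes coincide. -/
def isCycle (A : Fin m → Fin m → EReal) (W : List (Fin m)) : Prop :=
  isWalk A W ∧ 2 ≤ W.length ∧ W.head? = W.getLast?

/-- A matrix is irreducible iff its digraph is strongly connected. -/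
def irreducible (A : Fin m → Fin m → EReal) : Prop :=
  ∀ i j : Fin m, ∃ W, isWalk A W ∧ W.head? = some i ∧ W.getLast? = some j

/-- Geometric equivalence: the digraphs have the same arcs. -/
def geomEq (A B : Fin m → Fin m → EReal) : Prop :=
  ∀ i j, A i j = ⊥ ↔ B i j = ⊥

/-- Max-plus matrix product. -/
def mp (A B : Fin m → Fin m → EReal) : Fin m → Fin m → EReal :=
  fun i j => ⨆ s, A i s + B s j

/-- `Gamma M k = M 1 ⊗ M 2 ⊗ ⋯ ⊗ M k` (max-plus product), with `Gamma M 0` the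
max-plus identity matrix. -/
def Gamma (M : ℕ → Fin m → Fin m → EReal) : ℕ → Fin m → Fin m → EReal
  | 0 => fun i j => if i = j then 0 else ⊥
  | k + 1 => mp (Gamma M k) (M (k + 1))

/-- An initial walk from `i` to `one` on the trellis digraph of `M 1 ⊗ ⋯ ⊗ M k`:
it starts at node `i` at level `0`, ends at node `one` at some level `≤ k`, and the
only node of the walk equal to `one` is its final node. -/
def isInitialWalk (M : ℕ → Fin m → Fin m → EReal) (one : Fin m) (k : ℕ) (i : Fin m)
    (W : List (Fin m)) : Prop :=
  twalk M 0 W ∧ W.length - 1 ≤ k ∧ W.head? = some i ∧ W.getLast? = some one ∧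
    ∀ v ∈ W.dropLast, v ≠ one

/-- A final walk from `one` to `j` on the trellis digraph of `M 1 ⊗ ⋯ ⊗ M k`:
it starts at node `one` at some level `s`, ends at node `j` at level `k`, and the
only node of the walk equal to `one` is its first node. -/
def isFinalWalk (M : ℕ → Fin m → Fin m → EReal) (one : Fin m) (k : ℕ) (j : Fin m) (s : ℕ)
    (W : List (Fin m)) : Prop :=
  twalk M s W ∧ s + (W.length - 1) = k ∧ W.head? = some one ∧ W.getLast? = some j ∧
    ∀ v ∈ W.tail, v ≠ one

/-- A full walk from `i` to `j` on the trellis digraph of `M 1 ⊗ ⋯ ⊗ M k`: it goes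
from node `i` at level `0` to node `j` at level `k`. -/
def isFullWalk (M : ℕ → Fin m → Fin m → EReal) (k : ℕ) (i j : Fin m)
    (W : List (Fin m)) : Prop :=
  twalk M 0 W ∧ W.length = k + 1 ∧ W.head? = some i ∧ W.getLast? = some j

/-- `w_i*`: maximal weight of an initial walk from `i` to `one`. -/
def wStar (M : ℕ → Fin m → Fin m → EReal) (one : Fin m) (k : ℕ) (i : Fin m) : EReal :=
  sSup {x : EReal | ∃ W, isInitialWalk M one k i W ∧ x = tw M 0 W}

/-- `v_j*`: maximal weight of a final walk from `one` to `j`. -/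
def vStar (M : ℕ → Fin m → Fin m → EReal) (one : Fin m) (k : ℕ) (j : Fin m) : EReal :=
  sSup {x : EReal | ∃ s W, isFinalWalk M one k j s W ∧ x = tw M s W}

/-- `α_i`: maximal weight of a path on `D_A` from `i` to `one`. -/
def alphaE (A : Fin m → Fin m → EReal) (one : Fin m) (i : Fin m) : EReal :=
  sSup {x : EReal | ∃ W, isPath A W ∧ W.head? = some i ∧ W.getLast? = some one ∧
    x = wWeight A W}

/-- `β_j`: maximal weight of a path on `D_A` from `one` to `j`. -/
def betaE (A : Fin m → Fin m → EReal) (one : Fin m) (j : Fin m) : EReal :=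
  sSup {x : EReal | ∃ W, isPath A W ∧ W.head? = some one ∧ W.getLast? = some j ∧
    x = wWeight A W}

/-- `γ_{i,j}`: maximal weight of a path on `D_A` from `i` to `j` not passing through
`one` (`-∞` if no such path exists). -/
def gammaE (A : Fin m → Fin m → EReal) (one : Fin m) (i j : Fin m) : EReal :=
  sSup {x : EReal | ∃ W, isPath A W ∧ W.head? = some i ∧ W.getLast? = some j ∧
    (∀ v ∈ W, v ≠ one) ∧ x = wWeight A W}

/-- The set of mean weights of cycles of `D_A` avoiding the node `one`. -/
def lamSet (A : Fin m → Fin m → EReal) (one : Fin m) : Set ℝ :=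
  {x : ℝ | ∃ W, isCycle A W ∧ (∀ v ∈ W, v ≠ one) ∧
    ∃ r : ℝ, wWeight A W = (r : EReal) ∧ x = r / ((W.length : ℝ) - 1)}

/-- `λ*`: the supremum of the mean weights of cycles of `D_A` avoiding `one`. -/
def lamStar (A : Fin m → Fin m → EReal) (one : Fin m) : ℝ :=
  sSup (lamSet A one)

/-- `w_i`: maximal weight of a walk of length at most `k` from `i` to `one` on `D_A`. -/
def wInf (A : Fin m → Fin m → EReal) (one : Fin m) (k : ℕ) (i : Fin m) : EReal :=
  sSup {x : EReal | ∃ W, isWalk A W ∧ W.length - 1 ≤ k ∧ W.head? = some i ∧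
    W.getLast? = some one ∧ x = wWeight A W}

/-- `v_j`: maximal weight of a walk of length at most `k` from `one` to `j` on `D_A`. -/
def vInf (A : Fin m → Fin m → EReal) (one : Fin m) (k : ℕ) (j : Fin m) : EReal :=
  sSup {x : EReal | ∃ W, isWalk A W ∧ W.length - 1 ≤ k ∧ W.head? = some one ∧
    W.getLast? = some j ∧ x = wWeight A W}

/-- The standing assumptions of the paper on the set `𝒳` and its entrywise boundaries
`Asup` (supremum) and `Ainf` (infimum):
matrices of `𝒳` have no `+∞` entries, `Asup`/`Ainf` are the entrywise sup/inf,
`Asup` has no `+∞` entries and `Ainf` has no `-∞` entries where matrices of `𝒳` are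
finite; all matrices of `𝒳` and also `Ainf` are irreducible and pairwise geometrically
equivalent; every matrix of `𝒳` and also `Asup` has `(one, one)` entry `0` and all its
cycles other than (repetitions of) the loop at `one` have strictly negative (mean)
weight. -/
def Standing (𝒳 : Set (Fin m → Fin m → EReal)) (Asup Ainf : Fin m → Fin m → EReal)
    (one : Fin m) : Prop :=
  𝒳.Nonempty ∧
  (∀ X ∈ 𝒳, ∀ i j, X i j ≠ ⊤) ∧
  (∀ i j, Asup i j = ⨆ X ∈ 𝒳, X i j) ∧
  (∀ i j, Ainf i j = ⨅ X ∈ 𝒳, X i j) ∧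
  (∀ i j, Asup i j ≠ ⊤) ∧
  (∀ X ∈ 𝒳, ∀ i j, X i j ≠ ⊥ → Ainf i j ≠ ⊥) ∧
  (∀ X ∈ 𝒳, irreducible X) ∧
  irreducible Ainf ∧
  (∀ X ∈ 𝒳, geomEq X Ainf) ∧
  (∀ X ∈ 𝒳, X one one = 0) ∧
  (∀ X ∈ 𝒳, ∀ W, isCycle X W → (∃ v ∈ W, v ≠ one) → wWeight X W < 0) ∧
  Asup one one = 0 ∧
  (∀ W, isCycle Asup W → (∃ v ∈ W, v ≠ one) → wWeight Asup W < 0)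


/-!
A walk that meets `1` only at its end splits, by repeatedly cutting out the cycle closed at the
first repeated node, into a path with the same ends and simple cycles, none of which passes
through `1`. On `D_{A^sup}`, which dominates every factor entrywise, the path weighs at most
`α_i` and has at most `n - 1` arcs, while each cycle weighs at most `λ*` per arc. Hence
`w_i* ≤ α_i + λ* (l(W₁) - (n - 1))`, and dividing by `λ* < 0` bounds `l(W₁)`.
-/

theorem _root_.List.exists_eq_append_cons_append_cons_of_not_nodup {α : Type*} :
    ∀ {L : List α}, ¬ L.Nodup →
      ∃ P v Q R, L = P ++ v :: (Q ++ v :: R) ∧ (v :: Q).Nodup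
  | [], h => absurd List.nodup_nil h
  | a :: t, h => by
    by_cases ht : t.Nodup
    · obtain ⟨Q, R, rfl⟩ := List.append_of_mem (by simpa [ht] using h : a ∈ t)
      refine ⟨[], a, Q, R, rfl, List.nodup_cons.2 ⟨fun haQ => ?_, (List.nodup_append.1 ht).1⟩⟩
      exact (List.nodup_append.1 ht).2.2 a haQ a List.mem_cons_self rfl
    · obtain ⟨P, v, Q, R, rfl, hQ⟩ := List.exists_eq_append_cons_append_cons_of_not_nodup ht
      exact ⟨a :: P, v, Q, R, rfl, hQ⟩

section Walks

variable {B : Fin m → Fin m → EReal}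

lemma tw_const_level (B : Fin m → Fin m → EReal) :
    ∀ (s t : ℕ) (W : List (Fin m)), tw (fun _ => B) s W = tw (fun _ => B) t W
  | _, _, [] => rfl
  | _, _, [_] => rfl
  | s, t, _ :: b :: W => by rw [tw, tw, tw_const_level B (s + 1) (t + 1) (b :: W)]

lemma twalk_const_level (B : Fin m → Fin m → EReal) :
    ∀ (s t : ℕ) (W : List (Fin m)), twalk (fun _ => B) s W ↔ twalk (fun _ => B) t W
  | _, _, [] => Iff.rfl
  | _, _, [_] => Iff.rfl
  | s, t, _ :: b :: W => by rw [twalk, twalk, twalk_const_level B (s + 1) (t + 1) (b :: W)]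

@[simp] lemma wWeight_nil : wWeight B [] = 0 := rfl

@[simp] lemma wWeight_singleton (a : Fin m) : wWeight B [a] = 0 := rfl

@[simp] lemma wWeight_cons_cons (a b : Fin m) (W : List (Fin m)) :
    wWeight B (a :: b :: W) = B a b + wWeight B (b :: W) := by
  rw [wWeight, tw, tw_const_level B 1 0]; rfl

lemma isWalk.ne_nil {W : List (Fin m)} (hW : isWalk B W) : W ≠ [] := by
  rintro rfl
  exact hW

@[simp] lemma isWalk_singleton (a : Fin m) : isWalk B [a] := trivial

@[simp] lemma isWalk_cons_cons (a b : Fin m) (W : List (Fin m)) :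
    isWalk B (a :: b :: W) ↔ B a b ≠ ⊥ ∧ isWalk B (b :: W) := by
  rw [isWalk, twalk, twalk_const_level B 1 0]; rfl

lemma wWeight_append_cons (P : List (Fin m)) (v : Fin m) (S : List (Fin m)) :
    wWeight B (P ++ v :: S) = wWeight B (P ++ [v]) + wWeight B (v :: S) := by
  induction P with
  | nil => simp
  | cons a P ih => rcases P with _ | ⟨b, P⟩ <;> simp_all [add_assoc]

lemma isWalk_append_cons (P : List (Fin m)) (v : Fin m) (S : List (Fin m)) :
    isWalk B (P ++ v :: S) ↔ isWalk B (P ++ [v]) ∧ isWalk B (v :: S) := by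
  induction P with
  | nil => simp
  | cons a P ih => rcases P with _ | ⟨b, P⟩ <;> simp_all [and_assoc]

lemma wWeight_splice (P Q R : List (Fin m)) (v : Fin m) :
    wWeight B (P ++ v :: (Q ++ v :: R)) =
      wWeight B (P ++ v :: R) + wWeight B (v :: (Q ++ [v])) := by
  have h := wWeight_append_cons (B := B) (v :: Q) v R
  simp only [List.cons_append] at h
  rw [wWeight_append_cons, h, wWeight_append_cons P v R]
  abel

lemma isWalk_splice (P Q R : List (Fin m)) (v : Fin m) :
    isWalk B (P ++ v :: (Q ++ v :: R)) ↔
      isWalk B (P ++ v :: R) ∧ isWalk B (v :: (Q ++ [v])) := by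
  have h := isWalk_append_cons (B := B) (v :: Q) v R
  simp only [List.cons_append] at h
  rw [isWalk_append_cons, h, isWalk_append_cons P v R]
  tauto

lemma wWeight_ne_bot : ∀ {W : List (Fin m)}, isWalk B W → wWeight B W ≠ ⊥
  | [_], _ => by simp
  | _ :: _ :: _, hW => by
    rw [isWalk_cons_cons] at hW
    rw [wWeight_cons_cons, EReal.add_ne_bot_iff]
    exact ⟨hW.1, wWeight_ne_bot hW.2⟩

lemma wWeight_ne_top (hB : ∀ i j, B i j ≠ ⊤) : ∀ W : List (Fin m), wWeight B W ≠ ⊤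
  | [] => by simp
  | [_] => by simp
  | _ :: b :: W => by
    rw [wWeight_cons_cons]
    exact EReal.add_ne_top (hB _ _) (wWeight_ne_top hB (b :: W))

end Walks

section Decomposition

variable {B : Fin m → Fin m → EReal}

lemma exists_eq_singleton_of_isPath {P : List (Fin m)} (hP : isPath B P)
    (h : P.head? = P.getLast?) : ∃ v, P = [v] := by
  match P, hP, h with
  | [v], _, _ => exact ⟨v, rfl⟩
  | a :: b :: t, hP, h =>
    rw [List.head?_cons, List.getLast?_cons_cons] at h
    exact absurd (List.mem_of_getLast? h.symm) (List.nodup_cons.1 hP.2).1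

lemma exists_splice_of_not_nodup {W : List (Fin m)} (hW : isWalk B W) (hnd : ¬ W.Nodup) :
    ∃ W' C, isWalk B W' ∧ W'.head? = W.head? ∧ W'.getLast? = W.getLast? ∧
      (∀ u ∈ W'.dropLast, u ∈ W.dropLast) ∧
      isCycle B C ∧ C.dropLast.Nodup ∧ (∀ u ∈ C, u ∈ W.dropLast) ∧
      W.length + 1 = W'.length + C.length ∧ wWeight B W = wWeight B W' + wWeight B C := by
  obtain ⟨P, v, Q, R, rfl, hQ⟩ := List.exists_eq_append_cons_append_cons_of_not_nodup hnd
  have hdrop : (P ++ v :: (Q ++ v :: R)).dropLast = P ++ v :: Q ++ (v :: R).dropLast := by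
    rw [← List.dropLast_append_of_ne_nil (List.cons_ne_nil v R)]; simp
  have hdrop' : (P ++ v :: R).dropLast = P ++ (v :: R).dropLast :=
    List.dropLast_append_of_ne_nil (List.cons_ne_nil v R)
  rw [isWalk_splice] at hW
  refine ⟨P ++ v :: R, v :: (Q ++ [v]), hW.1, ?_, ?_, ?_, ⟨hW.2, ?_, ?_⟩, ?_, ?_, ?_,
    wWeight_splice P Q R v⟩
  · cases P <;> simp
  · rw [List.getLast?_append_cons, List.getLast?_append_cons, ← List.cons_append,
      List.getLast?_append_cons]
  · intro u hu
    rw [hdrop', List.mem_append] at hu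
    rw [hdrop]
    simp only [List.mem_append, List.mem_cons] at hu ⊢
    tauto
  · simp
  · rw [← List.cons_append, List.getLast?_append_cons]; rfl
  · rwa [← List.cons_append, List.dropLast_concat]
  · intro u hu
    rw [hdrop]
    simp only [List.mem_append, List.mem_cons] at hu ⊢
    tauto
  · simp; omega

/-- Splicing out simple cycles one at a time (`exists_splice_of_not_nodup`) leaves a path. -/
theorem exists_isPath_wWeight_le (S : Set (Fin m)) (μ : ℝ)
    (hcyc : ∀ C, isCycle B C → C.dropLast.Nodup → (∀ v ∈ C, v ∈ S) →
      wWeight B C ≤ ((μ * ((C.length : ℝ) - 1) : ℝ) : EReal))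
    {W : List (Fin m)} (hW : isWalk B W) (hS : ∀ v ∈ W.dropLast, v ∈ S) :
    ∃ P, isPath B P ∧ P.head? = W.head? ∧ P.getLast? = W.getLast? ∧
      wWeight B W ≤ wWeight B P + ((μ * ((W.length : ℝ) - P.length) : ℝ) : EReal) := by
  induction hlen : W.length using Nat.strong_induction_on generalizing W with
  | _ N ih =>
  subst hlen
  by_cases hnd : W.Nodup
  · exact ⟨W, ⟨hW, hnd⟩, rfl, rfl, by simp⟩
  obtain ⟨W', C, hW', hhead, hlast, hdrop, hC, hCnd, hCW, hlenC, hwC⟩ :=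
    exists_splice_of_not_nodup hW hnd
  obtain ⟨P, hP, hPh, hPl, hW'P⟩ :=
    ih W'.length (by have := hC.2.1; omega) hW' (fun u hu => hS u (hdrop u hu)) rfl
  refine ⟨P, hP, hPh.trans hhead, hPl.trans hlast, ?_⟩
  have hlenR : (W.length : ℝ) + 1 = W'.length + C.length := by exact_mod_cast hlenC
  calc wWeight B W = wWeight B W' + wWeight B C := hwC
    _ ≤ (wWeight B P + ((μ * ((W'.length : ℝ) - P.length) : ℝ) : EReal))
        + ((μ * ((C.length : ℝ) - 1) : ℝ) : EReal) :=
      add_le_add hW'P (hcyc C hC hCnd fun u hu => hS u (hCW u hu))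
    _ = wWeight B P + ((μ * ((W.length : ℝ) - P.length) : ℝ) : EReal) := by
      rw [add_assoc, ← EReal.coe_add]
      congr 2
      linear_combination -μ * hlenR

lemma wWeight_le_of_isCycle (S : Set (Fin m)) (μ : ℝ)
    (hcyc : ∀ C, isCycle B C → C.dropLast.Nodup → (∀ v ∈ C, v ∈ S) →
      wWeight B C ≤ ((μ * ((C.length : ℝ) - 1) : ℝ) : EReal))
    {W : List (Fin m)} (hW : isCycle B W) (hS : ∀ v ∈ W, v ∈ S) :
    wWeight B W ≤ ((μ * ((W.length : ℝ) - 1) : ℝ) : EReal) := by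
  obtain ⟨P, hP, hPh, hPl, hWP⟩ :=
    exists_isPath_wWeight_le S μ hcyc hW.1 fun v hv => hS v (List.mem_of_mem_dropLast hv)
  obtain ⟨v, rfl⟩ := exists_eq_singleton_of_isPath hP (by rw [hPh, hPl, hW.2.2])
  simpa using hWP

lemma finite_setOf_isCycle_nodup_dropLast (B : Fin m → Fin m → EReal) :
    {C | isCycle B C ∧ C.dropLast.Nodup}.Finite := by
  refine (List.finite_length_le (Fin m) (m + 1)).subset fun C ⟨_, hnd⟩ => ?_
  have := hnd.length_le_card
  simp only [List.length_dropLast, Fintype.card_fin] at this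
  simp only [Set.mem_ofPred_eq]
  omega

end Decomposition

lemma exists_neg_upper_bound_of_finite {s : Set ℝ} (hs : s.Finite) (hneg : ∀ x ∈ s, x < 0) :
    ∃ μ < 0, ∀ x ∈ s, x ≤ μ := by
  obtain ⟨μ, hμ, hmax⟩ :=
    Set.exists_max_image (insert (-1) s) id (hs.insert _) (Set.insert_nonempty _ _)
  refine ⟨μ, ?_, fun x hx => hmax x (Set.mem_insert_of_mem _ hx)⟩
  rcases hμ with rfl | hμ
  exacts [by norm_num, hneg μ hμ]

section CycleMeans

variable {B : Fin m → Fin m → EReal} {one : Fin m}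

lemma isCycle.length_sub_one_pos {C : List (Fin m)} (hC : isCycle B C) :
    (0 : ℝ) < (C.length : ℝ) - 1 := by
  have : (2 : ℝ) ≤ C.length := by exact_mod_cast hC.2.1
  linarith

lemma wWeight_le_of_mean_le (hB : ∀ i j, B i j ≠ ⊤) {C : List (Fin m)} (hC : isCycle B C)
    {μ : ℝ} (h : (wWeight B C).toReal / ((C.length : ℝ) - 1) ≤ μ) :
    wWeight B C ≤ ((μ * ((C.length : ℝ) - 1) : ℝ) : EReal) := by
  rw [← EReal.coe_toReal (wWeight_ne_top hB C) (wWeight_ne_bot hC.1)]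
  exact_mod_cast (div_le_iff₀ hC.length_sub_one_pos).1 h

lemma mean_mem_lamSet (hB : ∀ i j, B i j ≠ ⊤) {C : List (Fin m)} (hC : isCycle B C)
    (hone : ∀ v ∈ C, v ≠ one) :
    (wWeight B C).toReal / ((C.length : ℝ) - 1) ∈ lamSet B one :=
  ⟨C, hC, hone, _, (EReal.coe_toReal (wWeight_ne_top hB C) (wWeight_ne_bot hC.1)).symm, rfl⟩

lemma mean_neg (hB : ∀ i j, B i j ≠ ⊤)
    (hneg : ∀ C, isCycle B C → (∀ v ∈ C, v ≠ one) → wWeight B C < 0) {C : List (Fin m)}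
    (hC : isCycle B C) (hone : ∀ v ∈ C, v ≠ one) :
    (wWeight B C).toReal / ((C.length : ℝ) - 1) < 0 := by
  have h := hneg C hC hone
  rw [← EReal.coe_toReal (wWeight_ne_top hB C) (wWeight_ne_bot hC.1)] at h
  exact div_neg_of_neg_of_pos (by exact_mod_cast h) hC.length_sub_one_pos

lemma bddAbove_lamSet (hneg : ∀ C, isCycle B C → (∀ v ∈ C, v ≠ one) → wWeight B C < 0) :
    BddAbove (lamSet B one) := by
  refine ⟨0, ?_⟩
  rintro _ ⟨C, hC, hone, r, hr, rfl⟩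
  have hr0 : r < 0 := by exact_mod_cast hr ▸ hneg C hC hone
  exact (div_neg_of_neg_of_pos hr0 hC.length_sub_one_pos).le

lemma wWeight_le_lamStar_mul (hB : ∀ i j, B i j ≠ ⊤)
    (hneg : ∀ C, isCycle B C → (∀ v ∈ C, v ≠ one) → wWeight B C < 0) {C : List (Fin m)}
    (hC : isCycle B C) (hone : ∀ v ∈ C, v ≠ one) :
    wWeight B C ≤ ((lamStar B one * ((C.length : ℝ) - 1) : ℝ) : EReal) :=
  wWeight_le_of_mean_le hB hC (le_csSup (bddAbove_lamSet hneg) (mean_mem_lamSet hB hC hone))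

/-- `λ*` is a supremum over infinitely many cycles, but it is bounded by the largest mean of
the finitely many simple ones, which is negative. -/
theorem lamStar_neg (hB : ∀ i j, B i j ≠ ⊤)
    (hneg : ∀ C, isCycle B C → (∀ v ∈ C, v ≠ one) → wWeight B C < 0)
    (hcyc : ∃ C, isCycle B C ∧ ∀ v ∈ C, v ≠ one) :
    lamStar B one < 0 := by
  set simple := {C | (isCycle B C ∧ C.dropLast.Nodup) ∧ ∀ v ∈ C, v ≠ one}
  have hfin : ((fun C => (wWeight B C).toReal / ((C.length : ℝ) - 1)) '' simple).Finite :=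
    ((finite_setOf_isCycle_nodup_dropLast B).subset fun _ hC => hC.1).image _
  obtain ⟨μ, hμ, hμmax⟩ := exists_neg_upper_bound_of_finite hfin <| by
    rintro _ ⟨C, ⟨⟨hC, -⟩, hone⟩, rfl⟩
    exact mean_neg hB hneg hC hone
  have hsimple : ∀ C, isCycle B C → C.dropLast.Nodup → (∀ v ∈ C, v ∈ {v | v ≠ one}) →
      wWeight B C ≤ ((μ * ((C.length : ℝ) - 1) : ℝ) : EReal) :=
    fun C hC hnd hone => wWeight_le_of_mean_le hB hC (hμmax _ ⟨C, ⟨⟨hC, hnd⟩, hone⟩, rfl⟩)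
  obtain ⟨C₀, hC₀, hone₀⟩ := hcyc
  have hle : lamStar B one ≤ μ := by
    refine csSup_le ⟨_, mean_mem_lamSet hB hC₀ hone₀⟩ ?_
    rintro _ ⟨C, hC, hone, r, hr, rfl⟩
    have := wWeight_le_of_isCycle {v | v ≠ one} μ hsimple hC hone
    rw [hr] at this
    exact (div_le_iff₀ hC.length_sub_one_pos).2 (by exact_mod_cast this)
  linarith

end CycleMeans

lemma isWalk_and_tw_le_of_le {M : ℕ → Fin m → Fin m → EReal} {B : Fin m → Fin m → EReal} :
    ∀ {s : ℕ} {W : List (Fin m)}, (∀ l, s < l → l < s + W.length → ∀ x y, M l x y ≤ B x y) →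
      twalk M s W → isWalk B W ∧ tw M s W ≤ wWeight B W
  | _, [_], _, _ => ⟨trivial, le_rfl⟩
  | s, a :: b :: W, hMB, hW => by
    obtain ⟨hab, hW⟩ := hW
    have hle : M (s + 1) a b ≤ B a b := hMB (s + 1) (by omega) (by simp) a b
    obtain ⟨hBW, htw⟩ := isWalk_and_tw_le_of_le
      (fun l hl hl' => hMB l (by omega) (by simp at hl' ⊢; omega)) hW
    rw [isWalk_cons_cons, wWeight_cons_cons, tw]
    exact ⟨⟨ne_bot_of_le_ne_bot hab hle, hBW⟩, add_le_add hle htw⟩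

lemma wWeight_le_alphaE {B : Fin m → Fin m → EReal} {one i : Fin m} {P : List (Fin m)}
    (hP : isPath B P) (hi : P.head? = some i) (hone : P.getLast? = some one) :
    wWeight B P ≤ alphaE B one i :=
  le_sSup ⟨P, hP, hi, hone, rfl⟩

theorem rank_one_transient_statement0_general {n : ℕ}
    (𝒳 : Set (Fin (n + 2) → Fin (n + 2) → EReal))
    (Asup Ainf : Fin (n + 2) → Fin (n + 2) → EReal)
    (hstand : Standing 𝒳 Asup Ainf 0)
    (k : ℕ)
    (A : ℕ → Fin (n + 2) → Fin (n + 2) → EReal)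
    (hA : ∀ l, 1 ≤ l → l ≤ k → A l ∈ 𝒳)
    -- `D_{A^sup}` has at least one cycle avoiding node `one`, so `λ*` is finite
    (hcyc : ∃ W, isCycle Asup W ∧ ∀ v ∈ W, v ≠ (0 : Fin (n + 2)))
    (i : Fin (n + 2))
    -- `α_i` is the (finite) maximal weight of a path from `i` to `one` on `D_{A^sup}`
    (a : ℝ) (ha : (a : EReal) = alphaE Asup 0 i)
    -- `W₁` is an initial walk from `i` to `one` of maximal weight `w_i* = r`
    (r : ℝ) (W₁ : List (Fin (n + 2)))
    (h1 : isInitialWalk A 0 k i W₁)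
    (hw : tw A 0 W₁ = (r : EReal)) :
    (W₁.length : ℝ) - 1 ≤ (r - a) / lamStar Asup 0 + ((n + 2 : ℝ) - 1) := by
  obtain ⟨-, -, hsup, -, hsupTop, -, -, -, -, -, -, -, hsupCyc⟩ := hstand
  obtain ⟨hW₁, hlen, hhead, hlast, havoid⟩ := h1
  have hneg : ∀ C, isCycle Asup C → (∀ v ∈ C, v ≠ 0) → wWeight Asup C < 0 := fun C hC hone =>
    let ⟨v, hv⟩ := List.exists_mem_of_ne_nil C hC.1.ne_nil
    hsupCyc C hC ⟨v, hv, hone v hv⟩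
  have hAle : ∀ l, 0 < l → l < 0 + W₁.length → ∀ x y, A l x y ≤ Asup x y := fun l hl hl' x y =>
    (hsup x y).symm ▸ le_biSup (fun X => X x y) (hA l hl (by omega))
  obtain ⟨hwalk, hrW⟩ := isWalk_and_tw_le_of_le hAle hW₁
  obtain ⟨P, hP, hPh, hPl, hWP⟩ := exists_isPath_wWeight_le {v | v ≠ 0} (lamStar Asup 0)
    (fun C hC _ hone => wWeight_le_lamStar_mul hsupTop hneg hC hone) hwalk havoid
  have hPa : wWeight Asup P ≤ a := ha ▸ wWeight_le_alphaE hP (hPh.trans hhead) (hPl.trans hlast)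
  have hr : r ≤ a + lamStar Asup 0 * ((W₁.length : ℝ) - P.length) := by
    rw [← EReal.coe_le_coe_iff, EReal.coe_add, ← hw]
    exact hrW.trans (hWP.trans (add_le_add_left hPa _))
  have hPlen : (P.length : ℝ) ≤ n + 2 := by
    exact_mod_cast hP.2.length_le_card.trans_eq (Fintype.card_fin _)
  have hcycles : (W₁.length : ℝ) - P.length ≤ (r - a) / lamStar Asup 0 := by
    rw [le_div_iff_of_neg (lamStar_neg hsupTop hneg hcyc)]
    linarith
  linarith

/-- length bound for a maximal-weight initial walk. -/
theorem rank_one_transient_statement0 {n : ℕ}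
    (𝒳 : Set (Fin (n + 2) → Fin (n + 2) → EReal))
    (Asup Ainf : Fin (n + 2) → Fin (n + 2) → EReal)
    (hstand : Standing 𝒳 Asup Ainf 0)
    (k : ℕ) (hk : 1 ≤ k)
    (A : ℕ → Fin (n + 2) → Fin (n + 2) → EReal)
    (hA : ∀ l, 1 ≤ l → l ≤ k → A l ∈ 𝒳)
    -- `D_{A^sup}` has at least one cycle avoiding node `one`, so `λ*` is finite
    (hcyc : ∃ W, isCycle Asup W ∧ ∀ v ∈ W, v ≠ (0 : Fin (n + 2)))
    (i : Fin (n + 2))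
    -- `α_i` is the (finite) maximal weight of a path from `i` to `one` on `D_{A^sup}`
    (a : ℝ) (ha : (a : EReal) = alphaE Asup 0 i)
    -- `W₁` is an initial walk from `i` to `one` of maximal weight `w_i* = r`
    (r : ℝ) (W₁ : List (Fin (n + 2)))
    (h1 : isInitialWalk A 0 k i W₁)
    (hw : tw A 0 W₁ = (r : EReal))
    (hopt : (r : EReal) = wStar A 0 k i) :
    (W₁.length : ℝ) - 1 ≤ (r - a) / lamStar Asup 0 + ((n + 2 : ℝ) - 1) :=
  rank_one_transient_statement0_general 𝒳 Asup Ainf hstand k A hA hcyc i a ha r W₁ h1 hw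

end MaxPlusTransient
end
end

section
/- Under the standing assumptions, suppose k > (w_i* − α_i + v_j* − β_j)/λ* + 2(n − 1). Then every walk W that has maximal weight among the full walks from i to j on 𝒯_{Γ(k)} passing through node 1 decomposes as W = W₁ ∘ C ∘ W₂, where W₁ is a maximal-weight initial walk from i to 1 with l(W₁) ≤ (w_i* − α_i)/λ* + (n − 1), W₂ is a maximal-weight final walk from 1 to j with l(W₂) ≤ (v_j* − β_j)/λ* + (n − 1), C consists solely of loop arcs at node 1 (arcs from 1:(l−1) to 1:l), and p_𝒯(W) = w_i* + v_j*. -/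
/-
Common framework for "A bound for the rank-one transient of inhomogeneous matrix
products in special case" (Kennedy-Cochran-Patrick, Sergeev, Berežný).

We work over the max-plus semiring, modelled inside `EReal` (so `⊥ = -∞` is the
max-plus zero and ordinary addition is the max-plus multiplication).  Matrices are
functions `Fin m → Fin m → EReal`.  The distinguished node "1" of the paper is the
node `0 : Fin (n+2)` (so that `n + 2 ≥ 2` plays the role of the paper's `n ≥ 2`).

A walk is a nonempty list of nodes.  Walks on the trellis digraph of the product
`A 1 ⊗ ⋯ ⊗ A k` additionally record the level at which they start: the arc from the
`(l-1)`-st to the `l`-th node of a walk starting at level `s` has weight given by the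
matrix `A (s + l)`.
-/

open scoped Classical

noncomputable section

namespace MaxPlusTransient

variable {m : ℕ}

/-! ### Infrastructure lemmas -/

variable {M N : ℕ → Fin m → Fin m → EReal}

lemma tw_cons_cons (s : ℕ) (a b : Fin m) (t : List (Fin m)) :
    tw M s (a :: b :: t) = M (s + 1) a b + tw M (s + 1) (b :: t) := rfl

lemma twalk_cons_cons (s : ℕ) (a b : Fin m) (t : List (Fin m)) :
    twalk M s (a :: b :: t) ↔ M (s + 1) a b ≠ ⊥ ∧ twalk M (s + 1) (b :: t) := Iff.rfl

lemma tw_split (s : ℕ) (U : List (Fin m)) (x : Fin m) (V : List (Fin m)) :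
    tw M s (U ++ x :: V) = tw M s (U ++ [x]) + tw M (s + U.length) (x :: V) := by
  induction U generalizing s with
  | nil => simp [tw]
  | cons a U ih =>
    cases U with
    | nil =>
      show tw M s (a :: x :: V) = tw M s [a, x] + tw M (s + 1) (x :: V)
      rw [tw_cons_cons, tw_cons_cons]
      rw [show tw M (s+1) [x] = 0 from rfl, add_zero]
    | cons b U =>
      show tw M s (a :: b :: (U ++ x :: V)) = tw M s (a :: b :: (U ++ [x])) + _
      rw [tw_cons_cons, tw_cons_cons]
      have := ih (s+1)
      simp only [List.cons_append] at this
      have hl : s + 1 + (b :: U).length = s + (a :: b :: U).length := by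
        simp [List.length_cons]; omega
      rw [this, hl, ← add_assoc]

lemma twalk_split (s : ℕ) (U : List (Fin m)) (x : Fin m) (V : List (Fin m)) :
    twalk M s (U ++ x :: V) ↔ twalk M s (U ++ [x]) ∧ twalk M (s + U.length) (x :: V) := by
  induction U generalizing s with
  | nil => simp [twalk]
  | cons a U ih =>
    cases U with
    | nil =>
      show twalk M s (a :: x :: V) ↔ twalk M s [a, x] ∧ twalk M (s + 1) (x :: V)
      rw [twalk_cons_cons, twalk_cons_cons]
      have : twalk M (s+1) [x] := trivial
      tauto
    | cons b U =>
      show twalk M s (a :: b :: (U ++ x :: V)) ↔ twalk M s (a :: b :: (U ++ [x])) ∧ _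
      rw [twalk_cons_cons, twalk_cons_cons]
      have := ih (s+1)
      simp only [List.cons_append] at this
      rw [this]
      have hl : s + 1 + (b :: U).length = s + (a :: b :: U).length := by
        simp [List.length_cons]; omega
      rw [hl, and_assoc]

lemma dropLast_concat_getLast? {X : List (Fin m)} {x : Fin m} (hX : X.getLast? = some x) :
    X.dropLast ++ [x] = X := by
  have hne : X ≠ [] := by rintro rfl; simp at hX
  rw [List.getLast?_eq_getLast hne, Option.some_inj] at hX
  rw [← hX]; exact List.dropLast_append_getLast hne

lemma tw_concat_last (s : ℕ) {X : List (Fin m)} {x : Fin m} (hX : X.getLast? = some x)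
    (y : Fin m) :
    tw M s (X ++ [y]) = tw M s X + M (s + X.length) x y := by
  have h1 : X.dropLast ++ [x] = X := dropLast_concat_getLast? hX
  have hne : X ≠ [] := by rintro rfl; simp at hX
  have h2 : X ++ [y] = X.dropLast ++ x :: [y] := by rw [← h1]; simp
  rw [h2, tw_split, h1]
  rw [show tw M (s + X.dropLast.length) (x :: [y])
      = M (s + X.dropLast.length + 1) x y + 0 from rfl, add_zero]
  congr 2
  have := @List.length_dropLast _ X
  have : X.length ≠ 0 := by simpa using hne
  omega

lemma twalk_concat_last (s : ℕ) {X : List (Fin m)} {x : Fin m} (hX : X.getLast? = some x)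
    (y : Fin m) :
    twalk M s (X ++ [y]) ↔ twalk M s X ∧ M (s + X.length) x y ≠ ⊥ := by
  have h1 : X.dropLast ++ [x] = X := dropLast_concat_getLast? hX
  have hne : X ≠ [] := by rintro rfl; simp at hX
  have h2 : X ++ [y] = X.dropLast ++ x :: [y] := by rw [← h1]; simp
  rw [h2, twalk_split, h1]
  have h3 : twalk M (s + X.dropLast.length) (x :: [y])
      ↔ (M (s + X.dropLast.length + 1) x y ≠ ⊥ ∧ True) := Iff.rfl
  rw [h3]
  have h4 : s + X.dropLast.length + 1 = s + X.length := by
    have := @List.length_dropLast _ X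
    have : X.length ≠ 0 := by simpa using hne
    omega
  rw [h4, and_true]

lemma tw_ne_bot : ∀ {s : ℕ} {W : List (Fin m)}, twalk M s W → tw M s W ≠ ⊥
  | _, [], h => absurd h not_false
  | _, [_], _ => by simp [tw]
  | s, a :: b :: t, h => by
    rw [tw_cons_cons]
    simp only [ne_eq, EReal.add_eq_bot_iff, not_or]
    exact ⟨h.1, tw_ne_bot h.2⟩

lemma tw_ne_top : ∀ {s : ℕ} {W : List (Fin m)},
    (∀ t a b, s < t → t ≤ s + (W.length - 1) → M t a b ≠ ⊤) → tw M s W ≠ ⊤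
  | _, [], _ => by simp [tw]
  | _, [_], _ => by simp [tw]
  | s, a :: b :: t, h => by
    rw [tw_cons_cons]
    intro htop
    have h1 : M (s+1) a b ≠ ⊤ := h (s+1) a b (by omega) (by simp only [List.length_cons]; omega)
    have h2 : tw M (s+1) (b :: t) ≠ ⊤ := tw_ne_top (fun u x y hu1 hu2 => by
      refine h u x y (by omega) ?_
      simp only [List.length_cons] at hu2 ⊢
      omega)
    exact absurd htop (ne_of_lt (EReal.add_lt_top h1 h2))

lemma tw_real {s : ℕ} {W : List (Fin m)} (hw : twalk M s W)
    (ht : ∀ t a b, s < t → t ≤ s + (W.length - 1) → M t a b ≠ ⊤) :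
    ∃ r : ℝ, tw M s W = (r : EReal) := by
  have h1 := tw_ne_bot hw
  have h2 := tw_ne_top ht
  generalize hx : tw M s W = x at h1 h2 ⊢
  induction x with
  | bot => simp at h1
  | coe r => exact ⟨r, rfl⟩
  | top => simp at h2

lemma tw_mono : ∀ {s t : ℕ} {W : List (Fin m)},
    (∀ d a b, 1 ≤ d → d ≤ W.length - 1 → M (s + d) a b ≤ N (t + d) a b) →
    tw M s W ≤ tw N t W
  | _, _, [], _ => le_refl _
  | _, _, [_], _ => le_refl _
  | s, t, a :: b :: c, h => by
    rw [tw_cons_cons, tw_cons_cons]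
    refine add_le_add (h 1 a b le_rfl (by simp)) (tw_mono (W := b :: c) fun d x y hd1 hd2 => ?_)
    rw [show s + 1 + d = s + (d+1) by omega, show t + 1 + d = t + (d+1) by omega]
    exact h (d+1) x y (by omega) (by simp only [List.length_cons] at hd2 ⊢; omega)

lemma twalk_mono : ∀ {s t : ℕ} {W : List (Fin m)},
    (∀ d a b, 1 ≤ d → d ≤ W.length - 1 → M (s + d) a b ≠ ⊥ → N (t + d) a b ≠ ⊥) →
    twalk M s W → twalk N t W
  | _, _, [], _, h => h
  | _, _, [_], _, _ => trivial
  | s, t, a :: b :: c, h, hw => by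
    rw [twalk_cons_cons] at hw ⊢
    refine ⟨h 1 a b le_rfl (by simp) hw.1, twalk_mono (W := b :: c) (fun d x y hd1 hd2 => ?_) hw.2⟩
    rw [show s + 1 + d = s + (d+1) by omega, show t + 1 + d = t + (d+1) by omega] at *
    exact h (d+1) x y (by omega) (by simp only [List.length_cons] at hd2 ⊢; omega)

lemma tw_const (A' : Fin m → Fin m → EReal) (s : ℕ) (W : List (Fin m)) :
    tw (fun _ => A') s W = wWeight A' W :=
  le_antisymm (tw_mono fun _ _ _ _ _ => le_rfl) (tw_mono fun _ _ _ _ _ => le_rfl)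

lemma twalk_const {A' : Fin m → Fin m → EReal} {s : ℕ} {W : List (Fin m)} :
    twalk (fun _ => A') s W ↔ isWalk A' W :=
  ⟨twalk_mono fun _ _ _ _ _ h => h, twalk_mono fun _ _ _ _ _ h => h⟩

lemma tw_replicate {z : Fin m} : ∀ {s c : ℕ}, (∀ t, s < t → t ≤ s + c → M t z z = 0) →
    tw M s (List.replicate (c + 1) z) = 0
  | s, 0, _ => rfl
  | s, c + 1, h => by
    show tw M s (z :: z :: List.replicate c z) = 0
    rw [tw_cons_cons, h (s+1) (by omega) (by omega)]
    rw [show (z : Fin m) :: List.replicate c z = List.replicate (c+1) z from rfl]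
    rw [tw_replicate (fun t h1 h2 => h t (by omega) (by omega)), add_zero]

lemma twalk_replicate {z : Fin m} : ∀ {s c : ℕ}, (∀ t, s < t → t ≤ s + c → M t z z ≠ ⊥) →
    twalk M s (List.replicate (c + 1) z)
  | s, 0, _ => trivial
  | s, c + 1, h => by
    show twalk M s (z :: z :: List.replicate c z)
    rw [twalk_cons_cons]
    refine ⟨h (s+1) (by omega) (by omega), ?_⟩
    exact twalk_replicate (fun t h1 h2 => h t (by omega) (by omega))

lemma exists_dup : ∀ {W : List (Fin m)}, ¬ W.Nodup →
    ∃ (P : List (Fin m)) (v : Fin m) (Q R : List (Fin m)), W = P ++ v :: (Q ++ v :: R)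
  | [], h => absurd List.nodup_nil h
  | a :: t, h => by
    by_cases ha : a ∈ t
    · obtain ⟨Q, R, rfl⟩ := List.append_of_mem ha
      exact ⟨[], a, Q, R, rfl⟩
    · have : ¬ t.Nodup := fun hn => h (List.nodup_cons.2 ⟨ha, hn⟩)
      obtain ⟨P, v, Q, R, rfl⟩ := exists_dup this
      exact ⟨a :: P, v, Q, R, rfl⟩

lemma first_occ {z : Fin m} : ∀ {W : List (Fin m)}, z ∈ W →
    ∃ X Y, W = X ++ z :: Y ∧ z ∉ X
  | [], h => absurd h List.not_mem_nil
  | a :: t, h => by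
    by_cases ha : a = z
    · exact ⟨[], t, by simp [ha], List.not_mem_nil⟩
    · have : z ∈ t := by rcases List.mem_cons.1 h with h' | h'; exact absurd h'.symm ha; exact h'
      obtain ⟨X, Y, rfl, hX⟩ := first_occ this
      exact ⟨a :: X, Y, rfl, by simp [hX, Ne.symm ha]⟩

lemma head?_append_cons (U : List (Fin m)) (x : Fin m) (V V' : List (Fin m)) :
    (U ++ x :: V).head? = (U ++ x :: V').head? := by cases U <;> rfl

lemma getLast?_append_cons (U : List (Fin m)) (x : Fin m) (V : List (Fin m)) :
    (U ++ x :: V).getLast? = (x :: V).getLast? := by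
  rw [List.getLast?_append]
  have : (x :: V).getLast? ≠ none := by simp
  cases h : (x :: V).getLast? with
  | none => exact absurd h this
  | some y => rfl

/-! ### Walks on a single digraph -/

variable {A' : Fin m → Fin m → EReal} {z : Fin m}

lemma wWeight_split (A' : Fin m → Fin m → EReal) (U : List (Fin m)) (x : Fin m)
    (V : List (Fin m)) :
    wWeight A' (U ++ x :: V) = wWeight A' (U ++ [x]) + wWeight A' (x :: V) := by
  have := tw_split (M := fun _ => A') 0 U x V
  rwa [tw_const, tw_const, tw_const] at this

lemma isWalk_split (A' : Fin m → Fin m → EReal) (U : List (Fin m)) (x : Fin m)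
    (V : List (Fin m)) :
    isWalk A' (U ++ x :: V) ↔ isWalk A' (U ++ [x]) ∧ isWalk A' (x :: V) := by
  have := twalk_split (M := fun _ => A') 0 U x V
  rw [twalk_const, twalk_const, twalk_const] at this
  exact this

lemma wWeight_real (hnotop : ∀ i j, A' i j ≠ ⊤) {U : List (Fin m)} (hw : isWalk A' U) :
    ∃ r : ℝ, wWeight A' U = (r : EReal) :=
  tw_real hw (fun _ a b _ _ => hnotop a b)

lemma lamSet_lt_zero (hcycneg : ∀ W, isCycle A' W → (∃ v ∈ W, v ≠ z) → wWeight A' W < 0) :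
    ∀ x ∈ lamSet A' z, x < 0 := by
  rintro x ⟨W, hc, hz, r, hr, rfl⟩
  have hlen := hc.2.1
  have hne : W ≠ [] := by rintro rfl; simp at hlen
  have hv : ∃ v ∈ W, v ≠ z := by
    obtain ⟨v, hv⟩ := List.exists_mem_of_ne_nil W hne
    exact ⟨v, hv, hz v hv⟩
  have hneg := hcycneg W hc hv
  rw [hr] at hneg
  have hr0 : r < 0 := by exact_mod_cast hneg
  have hl1 : (0:ℝ) < (W.length : ℝ) - 1 := by
    have : (2:ℝ) ≤ (W.length : ℝ) := by exact_mod_cast hlen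
    linarith
  exact div_neg_of_neg_of_pos hr0 hl1

lemma lamSet_bddAbove (hcycneg : ∀ W, isCycle A' W → (∃ v ∈ W, v ≠ z) → wWeight A' W < 0) :
    BddAbove (lamSet A' z) :=
  ⟨0, fun x hx => le_of_lt (lamSet_lt_zero hcycneg x hx)⟩

lemma cycle_wt_le (hcycneg : ∀ W, isCycle A' W → (∃ v ∈ W, v ≠ z) → wWeight A' W < 0)
    {W : List (Fin m)} {r : ℝ} (hc : isCycle A' W) (hz : ∀ v ∈ W, v ≠ z)
    (hr : wWeight A' W = (r : EReal)) :
    r ≤ lamStar A' z * ((W.length : ℝ) - 1) := by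
  have hmem : r / ((W.length : ℝ) - 1) ∈ lamSet A' z := ⟨W, hc, hz, r, hr, rfl⟩
  have hle : r / ((W.length : ℝ) - 1) ≤ lamStar A' z :=
    le_csSup (lamSet_bddAbove hcycneg) hmem
  have hl1 : (0:ℝ) < (W.length : ℝ) - 1 := by
    have : (2:ℝ) ≤ (W.length : ℝ) := by exact_mod_cast hc.2.1
    linarith
  calc r = r / ((W.length:ℝ) - 1) * ((W.length:ℝ) - 1) := by field_simp
  _ ≤ lamStar A' z * ((W.length : ℝ) - 1) :=
      mul_le_mul_of_nonneg_right hle (le_of_lt hl1)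

/-- Core path-extraction lemma with weight control. -/
lemma core (hnotop : ∀ i j, A' i j ≠ ⊤)
    (hcycneg : ∀ W, isCycle A' W → (∃ v ∈ W, v ≠ z) → wWeight A' W < 0) :
    ∀ (N : ℕ) (U : List (Fin m)), U.length ≤ N → isWalk A' U → (∀ x ∈ U, x ≠ z) →
    ∃ P, isPath A' P ∧ P.head? = U.head? ∧ P.getLast? = U.getLast? ∧
      P.length ≤ U.length ∧ (∀ x ∈ P, x ∈ U) ∧
      wWeight A' U ≤ wWeight A' P +
        ((lamStar A' z * ((U.length : ℝ) - (P.length : ℝ)) : ℝ) : EReal) := by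
  intro N
  induction N with
  | zero =>
    intro U hlen hw _
    have : U = [] := List.length_eq_zero_iff.mp (Nat.le_zero.mp hlen)
    subst this
    exact absurd hw not_false
  | succ N ih =>
    intro U hlen hw hz
    by_cases hnd : U.Nodup
    · exact ⟨U, ⟨hw, hnd⟩, rfl, rfl, le_rfl, fun x hx => hx, by simp⟩
    · obtain ⟨P₀, v, Q, R, rfl⟩ := exists_dup hnd
      set U₀ : List (Fin m) := P₀ ++ v :: (Q ++ v :: R) with hU₀
      set U' : List (Fin m) := P₀ ++ v :: R with hU'
      -- weight splits
      have hw1 : wWeight A' U₀ = wWeight A' (P₀ ++ [v]) + wWeight A' (v :: (Q ++ v :: R)) :=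
        wWeight_split A' P₀ v (Q ++ v :: R)
      have hshape : v :: (Q ++ v :: R) = (v :: Q) ++ v :: R := rfl
      have hw2 : wWeight A' (v :: (Q ++ v :: R))
          = wWeight A' ((v :: Q) ++ [v]) + wWeight A' (v :: R) := by
        rw [hshape]; exact wWeight_split A' (v :: Q) v R
      have hwU' : wWeight A' U' = wWeight A' (P₀ ++ [v]) + wWeight A' (v :: R) :=
        wWeight_split A' P₀ v R
      -- walk splits
      have hwalk1 := (isWalk_split A' P₀ v (Q ++ v :: R)).1 hw
      have hwalk2 := (isWalk_split A' (v :: Q) v R).1 (hshape ▸ hwalk1.2)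
      have hwalkU' : isWalk A' U' := (isWalk_split A' P₀ v R).2 ⟨hwalk1.1, hwalk2.2⟩
      -- the removed cycle
      set C : List (Fin m) := (v :: Q) ++ [v] with hC
      have hcycC : isCycle A' C := by
        refine ⟨hwalk2.1, by simp [hC], ?_⟩
        rw [hC, show ((v:Fin m) :: Q) ++ [v] = (v :: Q) ++ v :: ([]:List (Fin m)) from rfl,
          getLast?_append_cons]
        rfl
      have hzC : ∀ x ∈ C, x ≠ z := by
        intro x hx
        refine hz x ?_
        simp only [hC, List.mem_append, List.mem_cons, List.mem_singleton] at hx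
        simp only [hU₀, List.mem_append, List.mem_cons]
        tauto
      obtain ⟨rc, hrc⟩ := wWeight_real hnotop hwalk2.1
      have hrcle : rc ≤ lamStar A' z * ((C.length : ℝ) - 1) :=
        cycle_wt_le hcycneg hcycC hzC hrc
      -- induction hypothesis on U'
      have hlenU' : U'.length ≤ N := by
        simp only [hU', hU₀, List.length_append, List.length_cons] at hlen ⊢
        omega
      have hzU' : ∀ x ∈ U', x ≠ z := by
        intro x hx
        refine hz x ?_
        simp only [hU', List.mem_append, List.mem_cons] at hx
        simp only [hU₀, List.mem_append, List.mem_cons]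
        tauto
      obtain ⟨P, hP, hPh, hPl, hPlen, hPmem, hPw⟩ := ih U' hlenU' hwalkU' hzU'
      refine ⟨P, hP, ?_, ?_, ?_, ?_, ?_⟩
      · rw [hPh]; exact (head?_append_cons P₀ v R (Q ++ v :: R)).symm ▸ rfl
      · rw [hPl, hU', getLast?_append_cons, hU₀, getLast?_append_cons, hshape,
          getLast?_append_cons]
      · refine le_trans hPlen ?_
        simp only [hU', hU₀, List.length_append, List.length_cons]
        omega
      · intro x hx
        have := hPmem x hx
        simp only [hU', List.mem_append, List.mem_cons] at this
        simp only [hU₀, List.mem_append, List.mem_cons]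
        tauto
      · have hlennat : U₀.length = U'.length + (Q.length + 1) := by
          simp only [hU', hU₀, List.length_append, List.length_cons]; omega
        have hCl : (C.length : ℝ) - 1 = (Q.length : ℝ) + 1 := by
          have : C.length = Q.length + 2 := by simp [hC]
          rw [this]; push_cast; ring
        have hr3 : lamStar A' z * ((U'.length : ℝ) - (P.length : ℝ))
            + lamStar A' z * ((Q.length : ℝ) + 1)
            = lamStar A' z * ((U₀.length : ℝ) - (P.length : ℝ)) := by
          rw [show ((U₀.length : ℝ)) = (U'.length : ℝ) + ((Q.length:ℝ) + 1) by
            rw [hlennat]; push_cast; ring]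
          ring
        calc wWeight A' U₀ = wWeight A' U' + (rc : EReal) := by
              rw [hw1, hw2, hrc, hwU', add_assoc,
                add_comm ((rc : EReal)) (wWeight A' (v :: R))]
        _ ≤ (wWeight A' P + ((lamStar A' z * ((U'.length : ℝ) - (P.length : ℝ)) : ℝ) : EReal))
            + ((lamStar A' z * ((Q.length : ℝ) + 1) : ℝ) : EReal) := by
              refine add_le_add hPw ?_
              rw [hCl] at hrcle
              exact EReal.coe_le_coe_iff.2 hrcle
        _ = wWeight A' P + ((lamStar A' z * ((U₀.length : ℝ) - (P.length : ℝ)) : ℝ) : EReal) := by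
              rw [add_assoc, ← EReal.coe_add, hr3]

/-! ### `lamStar` is negative -/

/-- Set of mean weights of short cycles avoiding `z`. -/
def SCset (A' : Fin m → Fin m → EReal) (z : Fin m) : Set ℝ :=
  {x : ℝ | ∃ W, isCycle A' W ∧ (∀ v ∈ W, v ≠ z) ∧ W.length ≤ m + 1 ∧
    ∃ r : ℝ, wWeight A' W = (r : EReal) ∧ x = r / ((W.length : ℝ) - 1)}

lemma SCset_subset_lamSet : SCset A' z ⊆ lamSet A' z := by
  rintro x ⟨W, hc, hz, _, r, hr, rfl⟩
  exact ⟨W, hc, hz, r, hr, rfl⟩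

lemma cycle_step {W : List (Fin m)} (hc : isCycle A' W) (hnd : ¬ W.tail.Nodup) :
    ∃ (W' C : List (Fin m)), isCycle A' W' ∧ isCycle A' C ∧
      (∀ x ∈ W', x ∈ W) ∧ (∀ x ∈ C, x ∈ W) ∧
      W'.length < W.length ∧ C.length < W.length ∧
      W'.length + C.length = W.length + 1 ∧
      wWeight A' W = wWeight A' W' + wWeight A' C := by
  obtain ⟨hwalk, hlen2, hcl⟩ := hc
  obtain ⟨h, T, rfl⟩ : ∃ h T, W = h :: T := by
    cases W with
    | nil => simp at hlen2
    | cons h T => exact ⟨h, T, rfl⟩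
  obtain ⟨P, v, Q, R, hT⟩ := exists_dup hnd
  simp only [List.tail_cons] at hT
  subst hT
  have hshape0 : h :: (P ++ v :: (Q ++ v :: R)) = (h :: P) ++ v :: (Q ++ v :: R) := rfl
  have hshape : v :: (Q ++ v :: R) = (v :: Q) ++ v :: R := rfl
  refine ⟨(h :: P) ++ v :: R, (v :: Q) ++ [v], ?_, ?_, ?_, ?_, ?_, ?_, ?_, ?_⟩
  · -- isCycle W'
    rw [hshape0] at hwalk
    have h1 := (isWalk_split A' (h :: P) v (Q ++ v :: R)).1 hwalk
    have h2 := (isWalk_split A' (v :: Q) v R).1 (hshape ▸ h1.2)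
    refine ⟨(isWalk_split A' (h :: P) v R).2 ⟨h1.1, h2.2⟩, by simp [List.length_append]; omega, ?_⟩
    have e1 : ((h :: P) ++ v :: R).head? = some h := by simp
    have e2 : (h :: (P ++ v :: (Q ++ v :: R))).head? = some h := by simp
    have e3 : ((h :: P) ++ v :: R).getLast? = (v :: R).getLast? :=
      getLast?_append_cons _ _ _
    have e4 : (h :: (P ++ v :: (Q ++ v :: R))).getLast? = (v :: R).getLast? := by
      rw [hshape0, getLast?_append_cons, hshape, getLast?_append_cons]
    rw [e1, e3, ← e4, ← e2]
    exact hcl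
  · -- isCycle C
    rw [hshape0] at hwalk
    have h1 := (isWalk_split A' (h :: P) v (Q ++ v :: R)).1 hwalk
    have h2 := (isWalk_split A' (v :: Q) v R).1 (hshape ▸ h1.2)
    refine ⟨h2.1, by simp, ?_⟩
    rw [show ((v:Fin m) :: Q) ++ [v] = (v :: Q) ++ v :: ([] : List (Fin m)) from rfl,
      getLast?_append_cons]
    rfl
  · intro x hx
    simp only [List.mem_append, List.mem_cons] at hx ⊢
    tauto
  · intro x hx
    simp only [List.mem_append, List.mem_cons, List.mem_singleton] at hx ⊢
    tauto
  · simp only [List.length_append, List.length_cons, List.length_nil]; omega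
  · simp only [List.length_append, List.length_cons, List.length_singleton,
      List.length_nil]; omega
  · simp only [List.length_append, List.length_cons, List.length_singleton,
      List.length_nil]; omega
  · rw [hshape0, wWeight_split A' (h :: P) v (Q ++ v :: R), hshape,
      wWeight_split A' (v :: Q) v R, wWeight_split A' (h :: P) v R]
    rw [add_assoc, add_comm (wWeight A' ((v :: Q) ++ [v])) (wWeight A' (v :: R)), ← add_assoc]

lemma exists_short_cycle : ∀ (N : ℕ) (W : List (Fin m)), W.length ≤ N → isCycle A' W →
    (∀ v ∈ W, v ≠ z) → ∃ W', isCycle A' W' ∧ (∀ v ∈ W', v ≠ z) ∧ W'.length ≤ m + 1 := by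
  intro N
  induction N with
  | zero =>
    intro W hlen hc _
    have := hc.2.1; omega
  | succ N ih =>
    intro W hlen hc hz
    by_cases hnd : W.tail.Nodup
    · refine ⟨W, hc, hz, ?_⟩
      have h1 : W.tail.length ≤ m := by
        simpa [Fintype.card_fin] using hnd.length_le_card
      have h2 : W.length = W.tail.length + 1 := by
        cases W with
        | nil => have := hc.2.1; simp at this
        | cons a t => simp
      omega
    · obtain ⟨W', C, _, hcC, _, hmemC, _, hCshort, _, _⟩ := cycle_step hc hnd
      exact ih C (by omega) hcC (fun v hv => hz v (hmemC v hv))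

lemma cyc_wt_le_sc (hnotop : ∀ i j, A' i j ≠ ⊤)
    (hcycneg : ∀ W, isCycle A' W → (∃ v ∈ W, v ≠ z) → wWeight A' W < 0) :
    ∀ (N : ℕ) (W : List (Fin m)), W.length ≤ N → isCycle A' W → (∀ v ∈ W, v ≠ z) →
    ∀ r : ℝ, wWeight A' W = (r : EReal) →
    r ≤ sSup (SCset A' z) * ((W.length : ℝ) - 1) := by
  intro N
  induction N with
  | zero => intro W hlen hc _; have := hc.2.1; omega
  | succ N ih =>
    intro W hlen hc hz r hr
    by_cases hnd : W.tail.Nodup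
    · have hshort : W.length ≤ m + 1 := by
        have h1 : W.tail.length ≤ m := by
          simpa [Fintype.card_fin] using hnd.length_le_card
        have h2 : W.length = W.tail.length + 1 := by
          cases W with
          | nil => have := hc.2.1; simp at this
          | cons a t => simp
        omega
      have hmem : r / ((W.length : ℝ) - 1) ∈ SCset A' z := ⟨W, hc, hz, hshort, r, hr, rfl⟩
      have hbdd : BddAbove (SCset A' z) := BddAbove.mono SCset_subset_lamSet (lamSet_bddAbove hcycneg)
      have hle := le_csSup hbdd hmem
      have hl1 : (0:ℝ) < (W.length : ℝ) - 1 := by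
        have : (2:ℝ) ≤ (W.length : ℝ) := by exact_mod_cast hc.2.1
        linarith
      calc r = r / ((W.length:ℝ) - 1) * ((W.length:ℝ) - 1) := by field_simp
      _ ≤ _ := mul_le_mul_of_nonneg_right hle (le_of_lt hl1)
    · obtain ⟨W', C, hcW', hcC, hmemW', hmemC, hW'short, hCshort, hlensum, hwsum⟩ :=
        cycle_step hc hnd
      have hwalkW' := hcW'.1
      have hwalkC := hcC.1
      obtain ⟨r', hr'⟩ := wWeight_real hnotop hwalkW'
      obtain ⟨rc, hrc⟩ := wWeight_real hnotop hwalkC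
      have hsum : r = r' + rc := by
        rw [hr', hrc, ← EReal.coe_add] at hwsum
        rw [hr] at hwsum
        exact_mod_cast hwsum
      have h1 := ih W' (by omega) hcW' (fun v hv => hz v (hmemW' v hv)) r' hr'
      have h2 := ih C (by omega) hcC (fun v hv => hz v (hmemC v hv)) rc hrc
      have hl : (W'.length : ℝ) + (C.length : ℝ) = (W.length : ℝ) + 1 := by
        exact_mod_cast congrArg (fun x : ℕ => (x : ℝ)) hlensum
      rw [hsum]
      have hkey : sSup (SCset A' z) * ((W'.length:ℝ) - 1)
          + sSup (SCset A' z) * ((C.length:ℝ) - 1)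
          = sSup (SCset A' z) * ((W.length:ℝ) - 1) := by
        rw [show ((W.length:ℝ)) = (W'.length:ℝ) + (C.length:ℝ) - 1 by linarith]
        ring
      linarith [h1, h2]

lemma SCset_finite : (SCset A' z).Finite := by
  have hfin : {l : List (Fin m) | l.length ≤ m + 1}.Finite := List.finite_length_le (Fin m) (m+1)
  refine Set.Finite.subset (hfin.image
    (fun W => (wWeight A' W).toReal / ((W.length : ℝ) - 1))) ?_
  rintro x ⟨W, hc, hz, hshort, r, hr, rfl⟩
  exact ⟨W, hshort, by simp only []; rw [hr, EReal.toReal_coe]⟩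

lemma SCset_nonempty (hnotop : ∀ i j, A' i j ≠ ⊤)
    (hcyc : ∃ W, isCycle A' W ∧ ∀ v ∈ W, v ≠ z) : (SCset A' z).Nonempty := by
  obtain ⟨W, hc, hz⟩ := hcyc
  obtain ⟨W', hc', hz', hshort⟩ := exists_short_cycle W.length W le_rfl hc hz
  obtain ⟨r, hr⟩ := wWeight_real hnotop hc'.1
  exact ⟨r / ((W'.length : ℝ) - 1), W', hc', hz', hshort, r, hr, rfl⟩

lemma lamSet_nonempty (hnotop : ∀ i j, A' i j ≠ ⊤)
    (hcyc : ∃ W, isCycle A' W ∧ ∀ v ∈ W, v ≠ z) : (lamSet A' z).Nonempty :=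
  (SCset_nonempty hnotop hcyc).mono SCset_subset_lamSet

lemma lamStar_neg_s2 (hnotop : ∀ i j, A' i j ≠ ⊤)
    (hcycneg : ∀ W, isCycle A' W → (∃ v ∈ W, v ≠ z) → wWeight A' W < 0)
    (hcyc : ∃ W, isCycle A' W ∧ ∀ v ∈ W, v ≠ z) : lamStar A' z < 0 := by
  have hmu : sSup (SCset A' z) ∈ SCset A' z :=
    (SCset_nonempty hnotop hcyc).csSup_mem SCset_finite
  have hmuneg : sSup (SCset A' z) < 0 :=
    lamSet_lt_zero hcycneg _ (SCset_subset_lamSet hmu)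
  have hle : lamStar A' z ≤ sSup (SCset A' z) := by
    refine csSup_le (lamSet_nonempty hnotop hcyc) ?_
    rintro x ⟨W, hc, hz, r, hr, rfl⟩
    have := cyc_wt_le_sc hnotop hcycneg W.length W le_rfl hc hz r hr
    have hl1 : (0:ℝ) < (W.length : ℝ) - 1 := by
      have : (2:ℝ) ≤ (W.length : ℝ) := by exact_mod_cast hc.2.1
      linarith
    rw [div_le_iff₀ hl1]
    linarith
  linarith

/-! ### Weight bounds for initial and final walks on `D_{A'}` -/

lemma tw_cons {M : ℕ → Fin m → Fin m → EReal} (s : ℕ) (x : Fin m) {T : List (Fin m)}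
    {y : Fin m} (hT : T.head? = some y) :
    tw M s (x :: T) = M (s + 1) x y + tw M (s + 1) T := by
  cases T with
  | nil => simp at hT
  | cons c T' => rw [List.head?_cons, Option.some_inj] at hT; subst hT; rfl

lemma twalk_cons {M : ℕ → Fin m → Fin m → EReal} (s : ℕ) (x : Fin m) {T : List (Fin m)}
    {y : Fin m} (hT : T.head? = some y) :
    twalk M s (x :: T) ↔ M (s + 1) x y ≠ ⊥ ∧ twalk M (s + 1) T := by
  cases T with
  | nil => simp at hT
  | cons c T' => rw [List.head?_cons, Option.some_inj] at hT; subst hT; exact Iff.rfl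

lemma head?_eq_of_ne_nil {V : List (Fin m)} (h : V ≠ []) (y : Fin m) :
    (V ++ [y]).head? = V.head? := by
  cases V with
  | nil => exact absurd rfl h
  | cons c T => rfl

lemma initial_bound (hnotop : ∀ i j, A' i j ≠ ⊤)
    (hcycneg : ∀ W, isCycle A' W → (∃ v ∈ W, v ≠ z) → wWeight A' W < 0)
    (hlamneg : lamStar A' z < 0)
    {U : List (Fin m)} (hwalk : isWalk A' U)
    (hlast : U.getLast? = some z) (hdrop : ∀ x ∈ U.dropLast, x ≠ z)
    {i : Fin m} (hhead : U.head? = some i)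
    {a : ℝ} (ha : (a : EReal) = alphaE A' z i) :
    wWeight A' U ≤ (((a + lamStar A' z * max 0 ((U.length : ℝ) - (m : ℝ))) : ℝ) : EReal) := by
  have hm1 : 1 ≤ m := z.pos
  have hU : U.dropLast ++ [z] = U := dropLast_concat_getLast? hlast
  set V := U.dropLast with hV
  by_cases hVnil : V = []
  · have hUz : U = [z] := by rw [← hU, hVnil]; rfl
    have hiz : i = z := by rw [hUz] at hhead; simpa using hhead.symm
    have hpz : isPath A' [z] := ⟨trivial, List.nodup_singleton z⟩
    have h0a : (0 : EReal) ≤ (a : EReal) := by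
      rw [ha]
      exact le_sSup ⟨[z], hpz, by simp [hiz], by simp, rfl⟩
    have hmax : max 0 ((U.length : ℝ) - (m : ℝ)) = 0 := by
      rw [hUz]
      simp only [List.length_singleton]
      rw [max_eq_left]
      have : (1:ℝ) ≤ (m:ℝ) := by exact_mod_cast hm1
      push_cast
      linarith
    rw [hmax, mul_zero, add_zero, hUz]
    exact h0a
  · obtain ⟨x, hx⟩ : ∃ x, V.getLast? = some x := by
      cases h : V.getLast? with
      | none => exact absurd (List.getLast?_eq_none_iff.mp h) hVnil
      | some y => exact ⟨y, rfl⟩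
    have hsplitw : wWeight A' U = wWeight A' V + A' x z := by
      rw [← hU, wWeight, tw_concat_last 0 hx z, tw_const]
    have hsplitwalk : isWalk A' V ∧ A' x z ≠ ⊥ := by
      have := (twalk_concat_last (M := fun _ => A') 0 hx z).1 (by rw [hU]; exact hwalk)
      exact ⟨this.1, this.2⟩
    have hVz : ∀ v ∈ V, v ≠ z := hdrop
    obtain ⟨P, hP, hPh, hPl, hPlen, hPmem, hPw⟩ :=
      core hnotop hcycneg V.length V le_rfl hsplitwalk.1 hVz
    have hPne : P ≠ [] := by
      rintro rfl; rw [List.getLast?_nil] at hPl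
      rw [← hPl] at hx; simp at hx
    have hPz : ∀ v ∈ P, v ≠ z := fun v hv => hVz v (hPmem v hv)
    have hwalkPz : isWalk A' (P ++ [z]) :=
      (twalk_concat_last (M := fun _ => A') 0 (hPl.trans hx) z).2 ⟨hP.1, hsplitwalk.2⟩
    have hnodupPz : (P ++ [z]).Nodup := by
      rw [List.nodup_append]
      exact ⟨hP.2, List.nodup_singleton z,
        fun v hv b hb hvb => (hPz v hv) (hvb.trans (by simpa using hb))⟩
    have hwPz : wWeight A' (P ++ [z]) = wWeight A' P + A' x z := by
      rw [wWeight, tw_concat_last 0 (hPl.trans hx) z, tw_const]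
    have hlenPz : (P ++ [z]).length ≤ m := by
      simpa [Fintype.card_fin] using hnodupPz.length_le_card
    have hmem : wWeight A' (P ++ [z]) ≤ (a : EReal) := by
      rw [ha]
      refine le_sSup ⟨P ++ [z], ⟨hwalkPz, hnodupPz⟩, ?_, by simp, rfl⟩
      rw [head?_eq_of_ne_nil hPne z, hPh, ← hhead, ← hU, head?_eq_of_ne_nil hVnil z]
    have hlenV : U.length = V.length + 1 := by
      rw [← hU]; simp
    have hlam : lamStar A' z * ((V.length : ℝ) - (P.length : ℝ))
        ≤ lamStar A' z * max 0 ((U.length : ℝ) - (m : ℝ)) := by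
      refine mul_le_mul_of_nonpos_left (max_le ?_ ?_) hlamneg.le
      · have := hPlen
        have h1 : (P.length : ℝ) ≤ (V.length : ℝ) := by exact_mod_cast this
        linarith
      · have h1 : (U.length : ℝ) = (V.length : ℝ) + 1 := by exact_mod_cast hlenV
        have h2 : (P.length : ℝ) + 1 ≤ (m : ℝ) := by
          have : P.length + 1 ≤ m := by simpa using hlenPz
          exact_mod_cast this
        linarith
    calc wWeight A' U = wWeight A' V + A' x z := hsplitw
    _ ≤ (wWeight A' P +
        ((lamStar A' z * ((V.length : ℝ) - (P.length : ℝ)) : ℝ) : EReal)) + A' x z :=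
        add_le_add hPw le_rfl
    _ = (wWeight A' P + A' x z) +
        ((lamStar A' z * ((V.length : ℝ) - (P.length : ℝ)) : ℝ) : EReal) := add_right_comm _ _ _
    _ = wWeight A' (P ++ [z]) +
        ((lamStar A' z * ((V.length : ℝ) - (P.length : ℝ)) : ℝ) : EReal) := by rw [hwPz]
    _ ≤ (a : EReal) + ((lamStar A' z * ((V.length : ℝ) - (P.length : ℝ)) : ℝ) : EReal) :=
        add_le_add hmem le_rfl
    _ ≤ (a : EReal) + ((lamStar A' z * max 0 ((U.length : ℝ) - (m : ℝ)) : ℝ) : EReal) :=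
        add_le_add le_rfl (EReal.coe_le_coe_iff.2 hlam)
    _ = _ := (EReal.coe_add _ _).symm

lemma final_bound (hnotop : ∀ i j, A' i j ≠ ⊤)
    (hcycneg : ∀ W, isCycle A' W → (∃ v ∈ W, v ≠ z) → wWeight A' W < 0)
    (hlamneg : lamStar A' z < 0)
    {U : List (Fin m)} (hwalk : isWalk A' U)
    (hhead : U.head? = some z) (htail : ∀ x ∈ U.tail, x ≠ z)
    {j : Fin m} (hlast : U.getLast? = some j)
    {b : ℝ} (hb : (b : EReal) = betaE A' z j) :
    wWeight A' U ≤ (((b + lamStar A' z * max 0 ((U.length : ℝ) - (m : ℝ))) : ℝ) : EReal) := by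
  have hm1 : 1 ≤ m := z.pos
  obtain ⟨T, rfl⟩ : ∃ T, U = z :: T := by
    cases U with
    | nil => simp at hhead
    | cons c T => exact ⟨T, by rw [List.head?_cons, Option.some_inj] at hhead; rw [hhead]⟩
  simp only [List.tail_cons] at htail
  by_cases hTnil : T = []
  · subst hTnil
    have hjz : j = z := by simpa using hlast.symm
    have hpz : isPath A' [z] := ⟨trivial, List.nodup_singleton z⟩
    have h0b : (0 : EReal) ≤ (b : EReal) := by
      rw [hb]
      exact le_sSup ⟨[z], hpz, by simp, by simp [hjz], rfl⟩
    have hmax : max 0 (((List.length [z] : ℕ) : ℝ) - (m : ℝ)) = 0 := by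
      simp only [List.length_singleton]
      rw [max_eq_left]
      have : (1:ℝ) ≤ (m:ℝ) := by exact_mod_cast hm1
      push_cast
      linarith
    rw [hmax, mul_zero, add_zero]
    exact h0b
  · obtain ⟨y, hy⟩ : ∃ y, T.head? = some y := by
      cases h : T.head? with
      | none => exact absurd (List.head?_eq_none_iff.mp h) hTnil
      | some c => exact ⟨c, rfl⟩
    have hsplitw : wWeight A' (z :: T) = A' z y + wWeight A' T := by
      rw [wWeight, tw_cons 0 z hy, tw_const]
    have hsplitwalk : A' z y ≠ ⊥ ∧ isWalk A' T := by
      have := (twalk_cons (M := fun _ => A') 0 z hy).1 hwalk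
      exact ⟨this.1, twalk_const.1 this.2⟩
    obtain ⟨P, hP, hPh, hPl, hPlen, hPmem, hPw⟩ :=
      core hnotop hcycneg T.length T le_rfl hsplitwalk.2 htail
    have hPne : P ≠ [] := by
      rintro rfl; rw [List.head?_nil] at hPh
      rw [← hPh] at hy; simp at hy
    have hPz : ∀ v ∈ P, v ≠ z := fun v hv => htail v (hPmem v hv)
    have hwalkzP : isWalk A' (z :: P) :=
      (twalk_cons (M := fun _ => A') 0 z (hPh.trans hy)).2 ⟨hsplitwalk.1, twalk_const.2 hP.1⟩
    have hnodupzP : (z :: P).Nodup :=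
      List.nodup_cons.2 ⟨fun hzp => (hPz z hzp) rfl, hP.2⟩
    have hwzP : wWeight A' (z :: P) = A' z y + wWeight A' P := by
      rw [wWeight, tw_cons 0 z (hPh.trans hy), tw_const]
    have hlenzP : (z :: P).length ≤ m := by
      simpa [Fintype.card_fin] using hnodupzP.length_le_card
    have hTlast : T.getLast? = some j := by
      rw [show (z :: T) = [z] ++ T from rfl, List.getLast?_append] at hlast
      cases h : T.getLast? with
      | none => exact absurd (List.getLast?_eq_none_iff.mp h) hTnil
      | some c => rw [h] at hlast; simpa using hlast
    have hlastzP : (z :: P).getLast? = some j := by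
      rw [show (z :: P) = [z] ++ P from rfl, List.getLast?_append, hPl, hTlast]
      rfl
    have hmem : wWeight A' (z :: P) ≤ (b : EReal) := by
      rw [hb]
      exact le_sSup ⟨z :: P, ⟨hwalkzP, hnodupzP⟩, by simp, hlastzP, rfl⟩
    have hlamle : lamStar A' z * ((T.length : ℝ) - (P.length : ℝ))
        ≤ lamStar A' z * max 0 (((z :: T).length : ℝ) - (m : ℝ)) := by
      refine mul_le_mul_of_nonpos_left (max_le ?_ ?_) hlamneg.le
      · have h1 : (P.length : ℝ) ≤ (T.length : ℝ) := by exact_mod_cast hPlen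
        linarith
      · have h1 : ((z :: T).length : ℝ) = (T.length : ℝ) + 1 := by
          simp
        have h2 : (P.length : ℝ) + 1 ≤ (m : ℝ) := by
          have : P.length + 1 ≤ m := by simpa using hlenzP
          exact_mod_cast this
        linarith
    calc wWeight A' (z :: T) = A' z y + wWeight A' T := hsplitw
    _ ≤ A' z y + (wWeight A' P +
        ((lamStar A' z * ((T.length : ℝ) - (P.length : ℝ)) : ℝ) : EReal)) :=
        add_le_add le_rfl hPw
    _ = (A' z y + wWeight A' P) +
        ((lamStar A' z * ((T.length : ℝ) - (P.length : ℝ)) : ℝ) : EReal) := (add_assoc _ _ _).symm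
    _ = wWeight A' (z :: P) +
        ((lamStar A' z * ((T.length : ℝ) - (P.length : ℝ)) : ℝ) : EReal) := by rw [hwzP]
    _ ≤ (b : EReal) + ((lamStar A' z * ((T.length : ℝ) - (P.length : ℝ)) : ℝ) : EReal) :=
        add_le_add hmem le_rfl
    _ ≤ (b : EReal) + ((lamStar A' z * max 0 (((z :: T).length : ℝ) - (m : ℝ)) : ℝ) : EReal) :=
        add_le_add le_rfl (EReal.coe_le_coe_iff.2 hlamle)
    _ = _ := (EReal.coe_add _ _).symm

lemma last_occ {z : Fin m} : ∀ {W : List (Fin m)}, z ∈ W →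
    ∃ X Y, W = X ++ z :: Y ∧ z ∉ Y
  | [], h => absurd h List.not_mem_nil
  | a :: t, h => by
    by_cases ht : z ∈ t
    · obtain ⟨X, Y, rfl, hY⟩ := last_occ ht
      exact ⟨a :: X, Y, rfl, hY⟩
    · have : a = z := by
        rcases List.mem_cons.1 h with h' | h'
        · exact h'.symm
        · exact absurd h' ht
      exact ⟨[], t, by simp [this], ht⟩

lemma rep_shuffle (c : ℕ) (z : Fin m) (T : List (Fin m)) :
    z :: (List.replicate c z ++ T) = List.replicate c z ++ z :: T := by
  induction c with
  | zero => rfl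
  | succ c ih => simp only [List.replicate_succ, List.cons_append, ih]

lemma glue (A : ℕ → Fin m → Fin m → EReal) (z : Fin m) (U₀ Tv : List (Fin m)) (c : ℕ)
    (hloop : ∀ t, U₀.length < t → t ≤ U₀.length + c → A t z z = 0) :
    tw A 0 (U₀ ++ z :: (List.replicate c z ++ Tv))
      = tw A 0 (U₀ ++ [z]) + tw A (U₀.length + c) (z :: Tv)
    ∧ (twalk A 0 (U₀ ++ z :: (List.replicate c z ++ Tv))
      ↔ twalk A 0 (U₀ ++ [z]) ∧ twalk A (U₀.length + c) (z :: Tv)) := by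
  have h1 : (z :: (List.replicate c z ++ Tv)) = List.replicate c z ++ z :: Tv :=
    rep_shuffle c z Tv
  have hlen : (List.replicate c z).length = c := List.length_replicate
  have hrep : List.replicate c z ++ [z] = List.replicate (c+1) z :=
    List.replicate_succ'.symm
  have hloop' : ∀ t, U₀.length < t → t ≤ U₀.length + c → A t z z ≠ ⊥ :=
    fun t h1 h2 => by rw [hloop t h1 h2]; exact ne_of_beq_false rfl
  constructor
  · rw [tw_split 0 U₀ z (List.replicate c z ++ Tv), h1,
      tw_split (0 + U₀.length) (List.replicate c z) z Tv, hrep]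
    have e3 : tw A (0 + U₀.length) (List.replicate (c+1) z) = 0 :=
      tw_replicate (fun t ht1 ht2 => hloop t (by omega) (by omega))
    rw [e3, zero_add, hlen]
    norm_num
  · rw [twalk_split 0 U₀ z (List.replicate c z ++ Tv), h1,
      twalk_split (0 + U₀.length) (List.replicate c z) z Tv, hrep]
    have e3 : twalk A (0 + U₀.length) (List.replicate (c+1) z) :=
      twalk_replicate (fun t ht1 ht2 => hloop' t (by omega) (by omega))
    have hl2 : 0 + U₀.length + (List.replicate c z).length = U₀.length + c := by
      rw [hlen]; omega
    rw [hl2]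
    simp only [Nat.zero_add] at e3
    norm_num [e3]

lemma glue_eq (z : Fin m) (U₀ Tv : List (Fin m)) (c : ℕ) :
    U₀ ++ z :: (List.replicate c z ++ Tv) = (U₀ ++ List.replicate c z) ++ z :: Tv := by
  rw [rep_shuffle, List.append_assoc]

/-- decomposition of a maximal-weight full walk through node `one`. -/
theorem rank_one_transient_statement2 {n : ℕ}
    (𝒳 : Set (Fin (n + 2) → Fin (n + 2) → EReal))
    (Asup Ainf : Fin (n + 2) → Fin (n + 2) → EReal)
    (hstand : Standing 𝒳 Asup Ainf 0)
    (k : ℕ) (hk : 1 ≤ k)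
    (A : ℕ → Fin (n + 2) → Fin (n + 2) → EReal)
    (hA : ∀ l, 1 ≤ l → l ≤ k → A l ∈ 𝒳)
    (hcyc : ∃ W, isCycle Asup W ∧ ∀ v ∈ W, v ≠ (0 : Fin (n + 2)))
    (i j : Fin (n + 2))
    (a : ℝ) (ha : (a : EReal) = alphaE Asup 0 i)
    (b : ℝ) (hb : (b : EReal) = betaE Asup 0 j)
    (w : ℝ) (hw : (w : EReal) = wStar A 0 k i)
    (v : ℝ) (hv : (v : EReal) = vStar A 0 k j)
    (hkbig : (k : ℝ) > (w - a + v - b) / lamStar Asup 0 + 2 * ((n + 2 : ℝ) - 1))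
    -- `W` has maximal weight among the full walks from `i` to `j` through node `one`
    (W : List (Fin (n + 2)))
    (hW : isFullWalk A k i j W)
    (hone : (0 : Fin (n + 2)) ∈ W)
    (hmax : ∀ W', isFullWalk A k i j W' → (0 : Fin (n + 2)) ∈ W' →
      tw A 0 W' ≤ tw A 0 W) :
    ∃ (W₁ : List (Fin (n + 2))) (c : ℕ) (W₂ : List (Fin (n + 2))),
      isInitialWalk A 0 k i W₁ ∧ tw A 0 W₁ = (w : EReal) ∧
      (W₁.length : ℝ) - 1 ≤ (w - a) / lamStar Asup 0 + ((n + 2 : ℝ) - 1) ∧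
      isFinalWalk A 0 k j (W₁.length - 1 + c) W₂ ∧
      tw A (W₁.length - 1 + c) W₂ = (v : EReal) ∧
      (W₂.length : ℝ) - 1 ≤ (v - b) / lamStar Asup 0 + ((n + 2 : ℝ) - 1) ∧
      W = W₁ ++ List.replicate c (0 : Fin (n + 2)) ++ W₂.tail ∧
      tw A 0 W = ((w + v : ℝ) : EReal) := by
  obtain ⟨hXne, hXnotop, hsup, hinf, hsupnotop, hinfbot, hXirr, hAinfirr, hgeo, hX00,
    hXcyc, hAsup00, hAsupcyc⟩ := hstand
  obtain ⟨hWwalk, hWlen, hWhead, hWlast⟩ := hW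
  set lam := lamStar Asup 0 with hlamdef
  have hlamneg : lam < 0 := lamStar_neg_s2 hsupnotop hAsupcyc hcyc
  have hm1 : (1 : ℝ) ≤ ((n + 2 : ℕ) : ℝ) := by push_cast; linarith
  -- generic transfer facts
  have hAle : ∀ t, 1 ≤ t → t ≤ k → ∀ p q, A t p q ≤ Asup p q := by
    intro t h1 h2 p q
    rw [hsup]
    exact le_biSup (fun X => X p q) (hA t h1 h2)
  have hloopA : ∀ t, 1 ≤ t → t ≤ k → A t 0 0 = (0 : EReal) :=
    fun t h1 h2 => hX00 _ (hA t h1 h2)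
  have htransfer : ∀ (s : ℕ) (W' : List (Fin (n+2))), s + (W'.length - 1) ≤ k →
      twalk A s W' → isWalk Asup W' := by
    intro s W' hs hwk
    refine twalk_const.1 (twalk_mono (M := A) (N := fun _ => Asup) (t := 0) ?_ hwk)
    intro d p q hd1 hd2 hne hbot
    have hbot' : Asup p q = ⊥ := hbot
    have hle := hAle (s + d) (by omega) (by omega) p q
    rw [hbot'] at hle
    exact hne (le_bot_iff.1 hle)
  have hwle : ∀ (s : ℕ) (W' : List (Fin (n+2))), s + (W'.length - 1) ≤ k →
      tw A s W' ≤ wWeight Asup W' := by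
    intro s W' hs
    rw [← tw_const Asup 0 W']
    exact tw_mono (fun d p q hd1 hd2 => hAle (s + d) (by omega) (by omega) p q)
  have htwreal : ∀ (s : ℕ) (W' : List (Fin (n+2))), s + (W'.length - 1) ≤ k →
      twalk A s W' → ∃ r : ℝ, tw A s W' = (r : EReal) := by
    intro s W' hs hwk
    exact tw_real hwk (fun t p q ht1 ht2 => hXnotop _ (hA t (by omega) (by omega)) p q)
  -- length-from-weight bound
  have lenbound : ∀ (L : ℕ) (r c0 : ℝ),
      r ≤ c0 + lam * max 0 ((L : ℝ) - ((n + 2 : ℕ) : ℝ)) →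
      (L : ℝ) - 1 ≤ (r - c0) / lam + (((n + 2 : ℕ) : ℝ) - 1) := by
    intro L r c0 hr
    rcases le_or_gt ((L : ℝ) - ((n + 2 : ℕ) : ℝ)) 0 with hc | hc
    · rw [max_eq_left hc, mul_zero, add_zero] at hr
      have h2 : 0 ≤ (r - c0) / lam := (le_div_iff_of_neg hlamneg).2 (by linarith)
      linarith
    · rw [max_eq_right hc.le] at hr
      have h3 : (L : ℝ) - ((n+2:ℕ):ℝ) ≤ (r - c0) / lam :=
        (le_div_iff_of_neg hlamneg).2 (by nlinarith)
      linarith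
  -- bound for arbitrary initial walks
  have ibound : ∀ U : List (Fin (n+2)), isInitialWalk A 0 k i U →
      tw A 0 U ≤ (((a + lam * max 0 ((U.length : ℝ) - ((n+2:ℕ) : ℝ))) : ℝ) : EReal) := by
    intro U hU
    obtain ⟨hUwalk, hUlen, hUhead, hUlast, hUdrop⟩ := hU
    refine le_trans (hwle 0 U (by omega)) ?_
    exact initial_bound hsupnotop hAsupcyc hlamneg
      (htransfer 0 U (by omega) hUwalk) hUlast hUdrop hUhead ha
  have fbound : ∀ (s : ℕ) (V' : List (Fin (n+2))), isFinalWalk A 0 k j s V' →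
      tw A s V' ≤ (((b + lam * max 0 ((V'.length : ℝ) - ((n+2:ℕ) : ℝ))) : ℝ) : EReal) := by
    intro s V' hV'
    obtain ⟨hVwalk, hVlen, hVhead, hVlast, hVtail⟩ := hV'
    refine le_trans (hwle s V' (by omega)) ?_
    exact final_bound hsupnotop hAsupcyc hlamneg
      (htransfer s V' (by omega) hVwalk) hVhead hVtail hVlast hb
  -- Step 1: decompose W
  obtain ⟨X, Y, hWdec, hXz⟩ := first_occ hone
  have honeY : (0 : Fin (n+2)) ∈ (0 : Fin (n+2)) :: Y := List.mem_cons_self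
  obtain ⟨B, T, hBT, hTz⟩ := last_occ honeY
  obtain ⟨c, hcW⟩ : ∃ c, W = X ++ (0 : Fin (n+2)) :: (List.replicate c 0 ++ T) := by
    cases B with
    | nil =>
      refine ⟨0, ?_⟩
      rw [List.nil_append, List.cons.injEq] at hBT
      rw [hWdec, hBT.2]
      simp
    | cons b B' =>
      rw [List.cons_append, List.cons.injEq] at hBT
      obtain ⟨hb0, hY⟩ := hBT
      subst hb0
      have hWmid : W = X ++ (0 : Fin (n+2)) :: (B' ++ 0 :: T) := by rw [hWdec, hY]
      have hlenW : X.length + 1 + B'.length + 1 + T.length = k + 1 := by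
        rw [hWmid] at hWlen
        simp only [List.length_append, List.length_cons] at hWlen
        omega
      have hall : ∀ x ∈ B', x = (0 : Fin (n+2)) := by
        by_contra hcon
        push_neg at hcon
        obtain ⟨x, hxB, hxne⟩ := hcon
        -- splits of W
        have f1 := (twalk_split (M := A) 0 X 0 (B' ++ 0 :: T)).1 (hWmid ▸ hWwalk)
        have f2 : twalk A (0 + X.length) (((0 : Fin (n+2)) :: B') ++ [0]) ∧
            twalk A (0 + X.length + ((0 : Fin (n+2)) :: B').length) ((0 : Fin (n+2)) :: T) :=
          (twalk_split (M := A) (0 + X.length) ((0 : Fin (n+2)) :: B') 0 T).1 f1.2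
        have hlev : 0 + X.length + ((0 : Fin (n+2)) :: B').length
            = X.length + (B'.length + 1) := by simp
        have f22 : twalk A (X.length + (B'.length + 1)) ((0 : Fin (n+2)) :: T) := by
          have := f2.2; rwa [hlev] at this
        set mid : List (Fin (n+2)) := ((0 : Fin (n+2)) :: B') ++ [0] with hmiddef
        have hmidlen : mid.length = B'.length + 2 := by simp [hmiddef]
        have hmidlevel : (0 + X.length) + (mid.length - 1) ≤ k := by
          rw [hmidlen]; omega
        have hmidAsup : isWalk Asup mid := htransfer _ mid hmidlevel f2.1
        have hmidcyc : isCycle Asup mid := by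
          refine ⟨hmidAsup, by rw [hmidlen]; omega, ?_⟩
          rw [hmiddef, show ((0:Fin (n+2)) :: B') ++ [0]
            = ((0:Fin (n+2)) :: B') ++ 0 :: ([] : List (Fin (n+2))) from rfl,
            getLast?_append_cons]
          rfl
        have hmidne : ∃ v' ∈ mid, v' ≠ (0 : Fin (n+2)) :=
          ⟨x, by simp [hmiddef, hxB], hxne⟩
        have hmidneg := hAsupcyc mid hmidcyc hmidne
        obtain ⟨rm, hrm⟩ := wWeight_real hsupnotop hmidAsup
        have hrmneg : rm < 0 := by
          rw [hrm] at hmidneg; exact_mod_cast hmidneg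
        have hmidle : tw A (0 + X.length) mid ≤ (rm : EReal) := by
          rw [← hrm]; exact hwle _ mid hmidlevel
        obtain ⟨r1, hr1⟩ := htwreal 0 (X ++ [0]) (by simp; omega) f1.1
        obtain ⟨rT, hrT⟩ := htwreal (X.length + (B'.length + 1)) ((0:Fin (n+2)) :: T)
          (by simp; omega) f22
        -- weight split of W
        have e1 := tw_split (M := A) 0 X (0 : Fin (n+2)) (B' ++ 0 :: T)
        have e2 : tw A (0 + X.length) ((0 : Fin (n+2)) :: (B' ++ 0 :: T))
            = tw A (0 + X.length) mid
              + tw A (0 + X.length + ((0 : Fin (n+2)) :: B').length) ((0:Fin (n+2)) :: T) :=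
          tw_split (M := A) (0 + X.length) ((0 : Fin (n+2)) :: B') 0 T
        rw [hlev] at e2
        have hWeq : tw A 0 W = tw A 0 (X ++ [(0 : Fin (n+2))])
            + (tw A (0 + X.length) mid + tw A (X.length + (B'.length + 1)) ((0:Fin (n+2)) :: T)) := by
          rw [hWmid, e1, e2]
        -- the replacement walk
        set W'' : List (Fin (n+2)) :=
          X ++ (0 : Fin (n+2)) :: (List.replicate (B'.length + 1) 0 ++ T) with hW''def
        have hglue := glue A 0 X T (B'.length + 1)
          (fun t ht1 ht2 => hloopA t (by omega) (by omega))
        have hW''walk : twalk A 0 W'' := hglue.2.mpr ⟨f1.1, f22⟩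
        have hW''len : W''.length = k + 1 := by
          simp only [hW''def, List.length_append, List.length_cons, List.length_replicate]
          omega
        have hW''head : W''.head? = some i := by
          rw [hW''def, head?_append_cons X 0 _ (B' ++ 0 :: T), ← hWmid]
          exact hWhead
        have hW''last : W''.getLast? = some j := by
          rw [hW''def, glue_eq, getLast?_append_cons]
          rw [hWmid, show X ++ (0:Fin (n+2)) :: (B' ++ 0 :: T)
            = (X ++ (0:Fin (n+2)) :: B') ++ 0 :: T by simp, getLast?_append_cons] at hWlast
          exact hWlast
        have hW''mem : (0 : Fin (n+2)) ∈ W'' := by simp [hW''def]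
        have htwW'' : tw A 0 W'' = tw A 0 (X ++ [(0 : Fin (n+2))])
            + tw A (X.length + (B'.length + 1)) ((0 : Fin (n+2)) :: T) := hglue.1
        -- contradiction
        have h5 : tw A 0 W ≤ ((r1 + (rm + rT) : ℝ) : EReal) := by
          rw [hWeq, hr1, hrT]
          calc (r1 : EReal) + (tw A (0 + X.length) mid + (rT : EReal))
              ≤ (r1 : EReal) + ((rm : EReal) + (rT : EReal)) :=
                add_le_add le_rfl (add_le_add hmidle le_rfl)
          _ = ((r1 + (rm + rT) : ℝ) : EReal) := by norm_cast
        have h6 : tw A 0 W'' = ((r1 + rT : ℝ) : EReal) := by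
          rw [htwW'', hr1, hrT]; norm_cast
        have hlt : tw A 0 W < tw A 0 W'' := by
          refine h5.trans_lt ?_
          rw [h6, EReal.coe_lt_coe_iff]
          linarith
        exact absurd (hmax W'' ⟨hW''walk, hW''len, hW''head, hW''last⟩ hW''mem)
          (not_le.2 hlt)
      have hBrep : B' = List.replicate B'.length (0 : Fin (n+2)) :=
        List.eq_replicate_iff.2 ⟨rfl, hall⟩
      refine ⟨B'.length + 1, ?_⟩
      rw [hWmid, hBrep, List.replicate_succ', List.append_assoc]
      simp
  -- main assembly
  have hlenW : X.length + 1 + c + T.length = k + 1 := by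
    rw [hcW] at hWlen
    simp only [List.length_append, List.length_cons, List.length_replicate] at hWlen
    omega
  set W₁ : List (Fin (n+2)) := X ++ [(0 : Fin (n+2))] with hW₁def
  set W₂ : List (Fin (n+2)) := (0 : Fin (n+2)) :: T with hW₂def
  set s₂ : ℕ := X.length + c with hs₂def
  have hglue := glue A 0 X T c (fun t ht1 ht2 => hloopA t (by omega) (by omega))
  have hWsplit : twalk A 0 W₁ ∧ twalk A s₂ W₂ := hglue.2.mp (hcW ▸ hWwalk)
  have hWtw : tw A 0 W = tw A 0 W₁ + tw A s₂ W₂ := by rw [hcW]; exact hglue.1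
  have hW₁head : W₁.head? = some i := by
    rw [hW₁def, show X ++ [(0:Fin (n+2))] = X ++ (0:Fin (n+2)) :: [] from rfl,
      head?_append_cons X (0 : Fin (n+2)) [] (List.replicate c 0 ++ T), ← hcW]
    exact hWhead
  have hW₁last : W₁.getLast? = some (0 : Fin (n+2)) := by
    rw [hW₁def, show X ++ [(0:Fin (n+2))] = X ++ (0:Fin (n+2)) :: [] from rfl,
      getLast?_append_cons]
    rfl
  have hW₂last : W₂.getLast? = some j := by
    have := hWlast
    rw [hcW, glue_eq, getLast?_append_cons] at this
    exact this
  have hXne0 : ∀ v' ∈ X, v' ≠ (0 : Fin (n+2)) := fun v' hv' h => hXz (h ▸ hv')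
  have hTne0 : ∀ v' ∈ T, v' ≠ (0 : Fin (n+2)) := fun v' hv' h => hTz (h ▸ hv')
  have hW₁len : W₁.length = X.length + 1 := by simp [hW₁def]
  have hW₂len : W₂.length = T.length + 1 := by simp [hW₂def]
  have hinit : isInitialWalk A 0 k i W₁ :=
    ⟨hWsplit.1, by rw [hW₁len]; omega, hW₁head, hW₁last,
      by rw [hW₁def, List.dropLast_concat]; exact hXne0⟩
  have hfin : isFinalWalk A 0 k j s₂ W₂ :=
    ⟨hWsplit.2, by rw [hW₂len]; omega, rfl, hW₂last, by
      intro v' hv'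
      rw [hW₂def, List.tail_cons] at hv'
      exact hTne0 v' hv'⟩
  obtain ⟨r₁, hr₁⟩ := htwreal 0 W₁ (by rw [hW₁len]; omega) hWsplit.1
  obtain ⟨r₂, hr₂⟩ := htwreal s₂ W₂ (by rw [hW₂len]; omega) hWsplit.2
  have hr₁w : r₁ ≤ w := by
    rw [← EReal.coe_le_coe_iff, ← hr₁, hw]
    exact le_sSup ⟨W₁, hinit, rfl⟩
  have hr₂v : r₂ ≤ v := by
    rw [← EReal.coe_le_coe_iff, ← hr₂, hv]
    exact le_sSup ⟨s₂, W₂, hfin, rfl⟩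
  -- attainment of `wStar` and `vStar`
  have hSwfin : {x : EReal | ∃ W', isInitialWalk A 0 k i W' ∧ x = tw A 0 W'}.Finite := by
    refine Set.Finite.subset
      ((List.finite_length_le (Fin (n+2)) (k+1)).image (fun W' => tw A 0 W')) ?_
    rintro x ⟨W', hW', rfl⟩
    exact ⟨W', by have := hW'.2.1; simp only [Set.mem_setOf_eq]; omega, rfl⟩
  have hSwne : Set.Nonempty {x : EReal | ∃ W', isInitialWalk A 0 k i W' ∧ x = tw A 0 W'} :=
    ⟨tw A 0 W₁, W₁, hinit, rfl⟩
  obtain ⟨Uw, hUw, hUwtw⟩ := hSwne.csSup_mem hSwfin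
  have hUwtw' : wStar A 0 k i = tw A 0 Uw := hUwtw
  have hUwval : tw A 0 Uw = (w : EReal) := by rw [← hUwtw', ← hw]
  have hSvfin : {x : EReal | ∃ s W', isFinalWalk A 0 k j s W' ∧ x = tw A s W'}.Finite := by
    refine Set.Finite.subset ((List.finite_length_le (Fin (n+2)) (k+1)).image
      (fun W' => tw A (k - (W'.length - 1)) W')) ?_
    rintro x ⟨s, W', hW', rfl⟩
    have hs : s = k - (W'.length - 1) := by have := hW'.2.1; omega
    exact ⟨W', by have := hW'.2.1; simp only [Set.mem_setOf_eq]; omega, by show tw A (k - (W'.length - 1)) W' = tw A s W'; rw [← hs]⟩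
  have hSvne : Set.Nonempty {x : EReal | ∃ s W', isFinalWalk A 0 k j s W' ∧ x = tw A s W'} :=
    ⟨tw A s₂ W₂, s₂, W₂, hfin, rfl⟩
  obtain ⟨sv, Vv, hVv, hVvtw⟩ := hSvne.csSup_mem hSvfin
  have hVvtw' : vStar A 0 k j = tw A sv Vv := hVvtw
  have hVvval : tw A sv Vv = (v : EReal) := by rw [← hVvtw', ← hv]
  -- length bounds for the optimal walks
  have hUwne : Uw ≠ [] := by rintro rfl; exact hUw.1
  have hVvne : Vv ≠ [] := by rintro rfl; exact hVv.1
  have hUwpos : 1 ≤ Uw.length := List.length_pos_iff.2 hUwne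
  have hVvpos : 1 ≤ Vv.length := List.length_pos_iff.2 hVvne
  have hUwbd : (Uw.length : ℝ) - 1 ≤ (w - a) / lam + (((n+2:ℕ) : ℝ) - 1) := by
    refine lenbound Uw.length w a ?_
    have := ibound Uw hUw
    rw [hUwval] at this
    exact EReal.coe_le_coe_iff.1 this
  have hVvbd : (Vv.length : ℝ) - 1 ≤ (v - b) / lam + (((n+2:ℕ) : ℝ) - 1) := by
    refine lenbound Vv.length v b ?_
    have := fbound sv Vv hVv
    rw [hVvval] at this
    exact EReal.coe_le_coe_iff.1 this
  have hsvk : sv + (Vv.length - 1) = k := hVv.2.1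
  have hcombo : (Uw.length - 1) + (Vv.length - 1) < k := by
    have hdiv : (w - a) / lam + (v - b) / lam = (w - a + v - b) / lam := by
      rw [← add_div]; ring_nf
    have hreal : ((Uw.length : ℝ) - 1) + ((Vv.length : ℝ) - 1) < (k : ℝ) := by
      have hkb := hkbig
      push_cast at hUwbd hVvbd hkb ⊢
      linarith
    have hn : Uw.length + Vv.length < k + 2 := by
      have hc2 : (Uw.length : ℝ) + (Vv.length : ℝ) < (k : ℝ) + 2 := by linarith
      exact_mod_cast hc2
    omega
  have hUwsv : Uw.length - 1 ≤ sv := by omega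
  set c'' : ℕ := sv - (Uw.length - 1) with hc''def
  have hUwlast : Uw.getLast? = some (0 : Fin (n+2)) := hUw.2.2.2.1
  have hU₀ : Uw.dropLast ++ [(0 : Fin (n+2))] = Uw := dropLast_concat_getLast? hUwlast
  obtain ⟨Tv, hTv⟩ : ∃ Tv, Vv = (0 : Fin (n+2)) :: Tv := by
    cases hVvc : Vv with
    | nil => exact absurd hVvc hVvne
    | cons y Tv =>
      have := hVv.2.2.1
      rw [hVvc, List.head?_cons, Option.some_inj] at this
      exact ⟨Tv, by rw [← this]⟩
  set U₀ : List (Fin (n+2)) := Uw.dropLast with hU₀def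
  have hU₀len : U₀.length = Uw.length - 1 := by simp [hU₀def]
  have hUc : U₀.length + c'' = sv := by omega
  have hglue2 := glue A 0 U₀ Tv c'' (fun t ht1 ht2 => hloopA t (by omega) (by omega))
  set Wc : List (Fin (n+2)) := U₀ ++ (0 : Fin (n+2)) :: (List.replicate c'' 0 ++ Tv)
    with hWcdef
  have hWcwalk : twalk A 0 Wc := by
    refine hglue2.2.mpr ⟨?_, ?_⟩
    · rw [hU₀]; exact hUw.1
    · rw [hUc, ← hTv]; exact hVv.1
  have hWctw : tw A 0 Wc = (w : EReal) + (v : EReal) := by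
    rw [hglue2.1, hU₀, hUc, ← hTv, hUwval, hVvval]
  have hWclen : Wc.length = k + 1 := by
    have hVvl : Vv.length = Tv.length + 1 := by rw [hTv]; simp
    simp only [hWcdef, List.length_append, List.length_cons, List.length_replicate]
    omega
  have hWchead : Wc.head? = some i := by
    rw [hWcdef, show (0:Fin (n+2)) :: (List.replicate c'' 0 ++ Tv)
      = (0:Fin (n+2)) :: (List.replicate c'' 0 ++ Tv) from rfl,
      head?_append_cons U₀ (0 : Fin (n+2)) (List.replicate c'' 0 ++ Tv) [], hU₀]
    exact hUw.2.2.1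
  have hWclast : Wc.getLast? = some j := by
    rw [hWcdef, glue_eq, getLast?_append_cons, ← hTv]
    exact hVv.2.2.2.1
  have hWcmem : (0 : Fin (n+2)) ∈ Wc := by simp [hWcdef]
  have hWcle := hmax Wc ⟨hWcwalk, hWclen, hWchead, hWclast⟩ hWcmem
  have hwv : w + v ≤ r₁ + r₂ := by
    rw [hWtw, hr₁, hr₂, hWctw] at hWcle
    have h' : ((w + v : ℝ) : EReal) ≤ ((r₁ + r₂ : ℝ) : EReal) := by push_cast; exact hWcle
    exact EReal.coe_le_coe_iff.1 h'
  have hr₁eq : r₁ = w := by linarith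
  have hr₂eq : r₂ = v := by linarith
  have htwW₁ : tw A 0 W₁ = (w : EReal) := by rw [hr₁, hr₁eq]
  have htwW₂ : tw A s₂ W₂ = (v : EReal) := by rw [hr₂, hr₂eq]
  have hW₁bd : (W₁.length : ℝ) - 1 ≤ (w - a) / lam + (((n+2:ℕ) : ℝ) - 1) := by
    refine lenbound W₁.length w a ?_
    have := ibound W₁ hinit
    rw [htwW₁] at this
    exact EReal.coe_le_coe_iff.1 this
  have hW₂bd : (W₂.length : ℝ) - 1 ≤ (v - b) / lam + (((n+2:ℕ) : ℝ) - 1) := by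
    refine lenbound W₂.length v b ?_
    have := fbound s₂ W₂ hfin
    rw [htwW₂] at this
    exact EReal.coe_le_coe_iff.1 this
  have hs₂' : W₁.length - 1 + c = s₂ := by rw [hW₁len, hs₂def]; omega
  refine ⟨W₁, c, W₂, hinit, htwW₁, ?_, ?_, ?_, ?_, ?_, ?_⟩
  · push_cast at hW₁bd ⊢; linarith
  · rw [hs₂']; exact hfin
  · rw [hs₂']; exact htwW₂
  · push_cast at hW₂bd ⊢; linarith
  · rw [hcW, hW₁def, hW₂def, List.tail_cons]
    simp [List.append_assoc]
  · rw [hWtw, htwW₁, htwW₂]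
    norm_cast
end MaxPlusTransient
end
end
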